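/- arXiv:2604.22956 — 5 statements merged into one kernel-verified Lean document; each statement's English description precedes it below -/
import Mathlib

section
/- There is a linear right inverse S of the Laplacian on polynomials such that for every homogeneous polynomial p of degree m on ℝ^d and every r > 0, ΔSp = p and ‖Sp‖_{P_r} ≤ (r²/√(m+1)) ‖p‖_{P_r}, where ‖·‖_{P_r} is the norm induced by the inner product ⟨p,q⟩_{P_r} = Σ_α (r^{2|α|}/α!) ∂^α p(0) ∂^α q(0). -/
open MvPolynomial

/-- Iterated partial derivative `∂^α` on polynomials in `d` variables. -/
noncomputable def pdMulti {d : ℕ} (α : Fin d → ℕ) :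
    MvPolynomial (Fin d) ℝ →ₗ[ℝ] MvPolynomial (Fin d) ℝ :=
  (List.ofFn (fun i : Fin d =>
    ((((MvPolynomial.pderiv i).toLinearMap : Module.End ℝ (MvPolynomial (Fin d) ℝ))) ^ (α i)))).prod

/-- The weighted apolar inner product
`⟨p,q⟩_{P_r} = Σ_α (r^{2|α|}/α!) ∂^α p(0) ∂^α q(0)`. -/
noncomputable def innerP {d : ℕ} (r : ℝ) (p q : MvPolynomial (Fin d) ℝ) : ℝ :=
  ∑ᶠ α : Fin d → ℕ,
    r ^ (2 * ∑ i, α i) / ((∏ i, Nat.factorial (α i) : ℕ) : ℝ) *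
      MvPolynomial.eval 0 (pdMulti α p) * MvPolynomial.eval 0 (pdMulti α q)

/-- The Laplacian on polynomials. -/
noncomputable def lap' {d : ℕ} : MvPolynomial (Fin d) ℝ →ₗ[ℝ] MvPolynomial (Fin d) ℝ :=
  ∑ i, ((MvPolynomial.pderiv i).toLinearMap : Module.End ℝ (MvPolynomial (Fin d) ℝ)) ^ 2

namespace ALap

variable {d : ℕ}

abbrev MvP (d : ℕ) := MvPolynomial (Fin d) ℝ

lemma pd_pow_monomial (i : Fin d) (k : ℕ) (β : Fin d →₀ ℕ) (c : ℝ) :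
    (((pderiv i).toLinearMap : Module.End ℝ (MvP d)) ^ k) (monomial β c)
      = monomial (β - Finsupp.single i k) (c * (β i).descFactorial k) := by
  induction k generalizing β c with
  | zero => simp
  | succ k ih =>
    rw [pow_succ', Module.End.mul_apply, ih]
    have : (((pderiv i).toLinearMap : Module.End ℝ (MvP d)))
        ((monomial (β - Finsupp.single i k)) (c * ((β i).descFactorial k : ℝ)))
        = pderiv i ((monomial (β - Finsupp.single i k)) (c * ((β i).descFactorial k : ℝ))) := rfl
    rw [this, pderiv_monomial]
    have h1 : β - Finsupp.single i k - Finsupp.single i 1 = β - Finsupp.single i (k + 1) := by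
      rw [tsub_tsub, ← Finsupp.single_add]
    have h2 : (β - Finsupp.single i k) i = β i - k := by
      simp [Finsupp.tsub_apply]
    rw [h1, h2, Nat.descFactorial_succ]
    congr 1
    push_cast
    ring

noncomputable def pdList (l : List (Fin d × ℕ)) : Module.End ℝ (MvP d) :=
  (l.map fun ik => (((pderiv ik.1).toLinearMap : Module.End ℝ (MvP d)) ^ ik.2)).prod

lemma pdList_monomial (l : List (Fin d × ℕ)) (hl : (l.map Prod.fst).Nodup)
    (β : Fin d →₀ ℕ) (c : ℝ) :
    pdList l (monomial β c)
      = monomial (β - (l.map fun ik => Finsupp.single ik.1 ik.2).sum)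
          (c * (l.map fun ik => ((β ik.1).descFactorial ik.2 : ℝ)).prod) := by
  induction l generalizing c with
  | nil => simp [pdList]
  | cons a t ih =>
    rw [List.map_cons, List.nodup_cons] at hl
    rw [pdList, List.map_cons, List.prod_cons, Module.End.mul_apply, ← pdList, ih hl.2,
      pd_pow_monomial]
    have hst : ((t.map fun ik => Finsupp.single ik.1 ik.2).sum) a.1 = 0 := by
      rw [show ((t.map fun ik => Finsupp.single ik.1 ik.2).sum) a.1
          = (Finsupp.applyAddHom (M := ℕ) a.1) (t.map fun ik => Finsupp.single ik.1 ik.2).sum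
          from rfl, map_list_sum, List.map_map]
      apply List.sum_eq_zero
      intro x hx
      simp only [List.mem_map, Function.comp_apply] at hx
      obtain ⟨z, hz, rfl⟩ := hx
      have : z.1 ≠ a.1 := by
        intro h; exact hl.1 (h ▸ List.mem_map_of_mem (f := Prod.fst) hz)
      simp [Finsupp.applyAddHom_apply, Finsupp.single_apply, this]
    have h1 : (β - (t.map fun ik => Finsupp.single ik.1 ik.2).sum) a.1 = β a.1 := by
      simp [Finsupp.tsub_apply, hst]
    rw [h1, List.map_cons, List.sum_cons, List.map_cons, List.prod_cons, tsub_tsub,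
      add_comm (Finsupp.single a.1 a.2)]
    ring_nf


noncomputable def αF (α : Fin d → ℕ) : Fin d →₀ ℕ := Finsupp.equivFunOnFinite.symm α

@[simp] lemma αF_apply (α : Fin d → ℕ) (i : Fin d) : αF α i = α i := rfl

lemma sum_single_eq (α : Fin d → ℕ) : ∑ i, Finsupp.single i (α i) = αF α := by
  ext j
  rw [Finset.sum_apply']
  simp [Finsupp.single_apply, αF]

lemma eval_zero_monomial (γ : Fin d →₀ ℕ) (a : ℝ) :
    eval (0 : Fin d → ℝ) (monomial γ a) = if γ = 0 then a else 0 := by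
  rw [eval_monomial]
  by_cases h : γ = 0
  · simp [h]
  · rw [if_neg h]
    obtain ⟨i, hi⟩ : ∃ i, γ i ≠ 0 := by
      by_contra hc
      push_neg at hc
      exact h (Finsupp.ext hc)
    have : γ.prod (fun n e => (0 : Fin d → ℝ) n ^ e) = 0 := by
      rw [Finsupp.prod]
      exact Finset.prod_eq_zero (Finsupp.mem_support_iff.2 hi) (by simp [zero_pow hi])
    rw [this, mul_zero]

lemma pdMulti_eq_pdList (α : Fin d → ℕ) :
    pdMulti α = pdList (List.ofFn fun i => (i, α i)) := by
  rw [pdMulti, pdList, List.map_ofFn]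
  rfl

lemma pdMulti_monomial (α : Fin d → ℕ) (β : Fin d →₀ ℕ) (c : ℝ) :
    pdMulti α (monomial β c)
      = monomial (β - αF α) (c * ∏ i, ((β i).descFactorial (α i) : ℝ)) := by
  rw [pdMulti_eq_pdList, pdList_monomial _ ?nodup, List.map_ofFn, List.map_ofFn]
  case nodup =>
    rw [List.map_ofFn]
    have h : (Prod.fst ∘ fun i : Fin d => (i, α i)) = id := rfl
    rw [h, List.ofFn_id]
    exact List.nodup_finRange d
  rw [List.sum_ofFn, List.prod_ofFn]
  simp only [Function.comp]
  rw [sum_single_eq]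

lemma eval_zero_pdMulti_monomial (α : Fin d → ℕ) (β : Fin d →₀ ℕ) (c : ℝ) :
    eval (0 : Fin d → ℝ) (pdMulti α (monomial β c))
      = if β = αF α then c * ∏ i, ((α i).factorial : ℝ) else 0 := by
  rw [pdMulti_monomial, eval_zero_monomial]
  by_cases hb : β = αF α
  · rw [if_pos hb, if_pos (by rw [hb, tsub_self]), hb]
    congr 1
    apply Finset.prod_congr rfl
    intro i _
    rw [show (αF α) i = α i from rfl, Nat.descFactorial_self]
  · rw [if_neg hb]
    by_cases hle : β - αF α = 0
    · rw [if_pos hle]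
      have hle' : β ≤ αF α := tsub_eq_zero_iff_le.mp hle
      obtain ⟨i, hi⟩ : ∃ i, β i < α i := by
        by_contra hc
        push_neg at hc
        apply hb
        ext j
        exact le_antisymm (hle' j) (hc j)
      have : ((β i).descFactorial (α i) : ℝ) = 0 := by
        rw [Nat.descFactorial_eq_zero_iff_lt.mpr hi]; norm_num
      rw [Finset.prod_eq_zero (Finset.mem_univ i) this, mul_zero]
    · rw [if_neg hle]

lemma eval_zero_pdMulti (α : Fin d → ℕ) (p : MvP d) :
    eval (0 : Fin d → ℝ) (pdMulti α p)
      = (∏ i, ((α i).factorial : ℝ)) * coeff (αF α) p := by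
  conv_lhs => rw [p.as_sum]
  rw [map_sum, map_sum]
  simp only [eval_zero_pdMulti_monomial]
  rw [Finset.sum_ite_eq' p.support (αF α)]
  by_cases h : αF α ∈ p.support
  · rw [if_pos h, mul_comm]
  · rw [if_neg h, notMem_support_iff.mp h, mul_zero]

noncomputable def w (r : ℝ) (β : Fin d →₀ ℕ) : ℝ :=
  r ^ (2 * ∑ i, β i) * ∏ i, ((β i).factorial : ℝ)

lemma w_pos {r : ℝ} (hr : 0 < r) (β : Fin d →₀ ℕ) : 0 < w r β := by
  apply mul_pos (pow_pos hr _)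
  apply Finset.prod_pos
  intro i _
  exact_mod_cast (β i).factorial_pos

lemma innerP_eq_sum (r : ℝ) (p q : MvP d) {s : Finset (Fin d →₀ ℕ)} (hs : p.support ⊆ s) :
    innerP r p q = ∑ β ∈ s, w r β * coeff β p * coeff β q := by
  rw [innerP]
  have step1 : ∀ α : Fin d → ℕ,
      r ^ (2 * ∑ i, α i) / ((∏ i, Nat.factorial (α i) : ℕ) : ℝ) *
        eval 0 (pdMulti α p) * eval 0 (pdMulti α q)
      = (fun β => w r β * coeff β p * coeff β q) (Finsupp.equivFunOnFinite.symm α) := by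
    intro α
    rw [eval_zero_pdMulti, eval_zero_pdMulti]
    have hN : ((∏ i, Nat.factorial (α i) : ℕ) : ℝ) ≠ 0 := by
      exact_mod_cast (Finset.prod_pos (fun i _ => (α i).factorial_pos)).ne'
    push_cast at hN ⊢
    show _ = w r (αF α) * coeff (αF α) p * coeff (αF α) q
    rw [w]
    have hsum : ∑ i, (αF α) i = ∑ i, α i := rfl
    rw [hsum]
    have hfac : ∏ i, (((αF α) i).factorial : ℝ) = ∏ i, ((α i).factorial : ℝ) := rfl
    rw [hfac]
    field_simp
  rw [finsum_congr step1,
    finsum_comp_equiv (Finsupp.equivFunOnFinite.symm : (Fin d → ℕ) ≃ (Fin d →₀ ℕ))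
      (f := fun β => w r β * coeff β p * coeff β q)]
  apply finsum_eq_finset_sum_of_support_subset
  intro β hβ
  simp only [Function.mem_support] at hβ
  apply hs
  rw [mem_support_iff]
  intro hc
  apply hβ
  rw [hc]
  ring

lemma innerP_eq (r : ℝ) (p q : MvP d) :
    innerP r p q = ∑ β ∈ p.support, w r β * coeff β p * coeff β q :=
  innerP_eq_sum r p q subset_rfl

lemma innerP_zero_left (r : ℝ) (q : MvP d) : innerP r 0 q = 0 := by
  rw [innerP_eq]
  simp

lemma innerP_comm (r : ℝ) (p q : MvP d) : innerP r p q = innerP r q p := by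
  rw [innerP, innerP]
  exact finsum_congr fun α => by ring

lemma innerP_monomial_left (r : ℝ) (β : Fin d →₀ ℕ) (b : ℝ) (q : MvP d) :
    innerP r (monomial β b) q = w r β * b * coeff β q := by
  rw [innerP_eq_sum r _ q (support_monomial_subset (s := β) (a := b)), Finset.sum_singleton,
    coeff_monomial, if_pos rfl]

lemma innerP_add_right (r : ℝ) (p q q' : MvP d) :
    innerP r p (q + q') = innerP r p q + innerP r p q' := by
  simp only [innerP_eq, coeff_add]
  rw [← Finset.sum_add_distrib]
  exact Finset.sum_congr rfl fun β _ => by ring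

lemma innerP_smul_right (r : ℝ) (a : ℝ) (p q : MvP d) :
    innerP r p (a • q) = a * innerP r p q := by
  simp only [innerP_eq, coeff_smul, smul_eq_mul, Finset.mul_sum]
  exact Finset.sum_congr rfl fun β _ => by ring

lemma innerP_add_left (r : ℝ) (p p' q : MvP d) :
    innerP r (p + p') q = innerP r p q + innerP r p' q := by
  rw [innerP_comm, innerP_add_right, innerP_comm r q p, innerP_comm r q p']

lemma innerP_smul_left (r : ℝ) (a : ℝ) (p q : MvP d) :
    innerP r (a • p) q = a * innerP r p q := by
  rw [innerP_comm, innerP_smul_right, innerP_comm]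



lemma innerP_self_nonneg {r : ℝ} (hr : 0 < r) (p : MvP d) : 0 ≤ innerP r p p := by
  rw [innerP_eq_sum r p p subset_rfl]
  apply Finset.sum_nonneg
  intro β _
  rw [mul_assoc]
  exact mul_nonneg (w_pos hr β).le (mul_self_nonneg _)

lemma innerP_self_pos {r : ℝ} (hr : 0 < r) {p : MvP d} (hp : p ≠ 0) : 0 < innerP r p p := by
  rw [innerP_eq_sum r p p subset_rfl]
  obtain ⟨β, hβ⟩ := MvPolynomial.support_nonempty.mpr hp
  apply Finset.sum_pos'
  · intro γ _
    rw [mul_assoc]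
    exact mul_nonneg (w_pos hr γ).le (mul_self_nonneg _)
  · refine ⟨β, hβ, ?_⟩
    rw [mul_assoc]
    have hc : coeff β p ≠ 0 := mem_support_iff.mp hβ
    exact mul_pos (w_pos hr β) (mul_self_pos.mpr hc)

lemma innerP_cauchy {r : ℝ} (hr : 0 < r) (p q : MvP d) :
    innerP r p q ≤ Real.sqrt (innerP r p p) * Real.sqrt (innerP r q q) := by
  classical
  set s := p.support ∪ q.support with hs
  have hp : p.support ⊆ s := Finset.subset_union_left
  have hq : q.support ⊆ s := Finset.subset_union_right
  set f : (Fin d →₀ ℕ) → ℝ := fun β => Real.sqrt (w r β) * coeff β p with hf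
  set g : (Fin d →₀ ℕ) → ℝ := fun β => Real.sqrt (w r β) * coeff β q with hg
  have hw : ∀ β : Fin d →₀ ℕ, Real.sqrt (w r β) * Real.sqrt (w r β) = w r β :=
    fun β => Real.mul_self_sqrt (w_pos hr β).le
  have e1 : innerP r p q = ∑ β ∈ s, f β * g β := by
    rw [innerP_eq_sum r p q hp]
    refine Finset.sum_congr rfl fun β _ => ?_
    show _ = (Real.sqrt (w r β) * coeff β p) * (Real.sqrt (w r β) * coeff β q)
    rw [mul_mul_mul_comm, hw β, mul_assoc]
  have e2 : innerP r p p = ∑ β ∈ s, f β ^ 2 := by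
    rw [innerP_eq_sum r p p hp]
    refine Finset.sum_congr rfl fun β _ => ?_
    show _ = (Real.sqrt (w r β) * coeff β p) ^ 2
    rw [mul_pow, Real.sq_sqrt (w_pos hr β).le]; ring
  have e3 : innerP r q q = ∑ β ∈ s, g β ^ 2 := by
    rw [innerP_eq_sum r q q hq]
    refine Finset.sum_congr rfl fun β _ => ?_
    show _ = (Real.sqrt (w r β) * coeff β q) ^ 2
    rw [mul_pow, Real.sq_sqrt (w_pos hr β).le]; ring
  have h2 : (∑ β ∈ s, f β * g β) ^ 2 ≤ (∑ β ∈ s, f β ^ 2) * ∑ β ∈ s, g β ^ 2 :=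
    Finset.sum_mul_sq_le_sq_mul_sq s f g
  calc innerP r p q ≤ |innerP r p q| := le_abs_self _
    _ = Real.sqrt ((∑ β ∈ s, f β * g β) ^ 2) := by rw [e1, Real.sqrt_sq_eq_abs]
    _ ≤ Real.sqrt ((∑ β ∈ s, f β ^ 2) * ∑ β ∈ s, g β ^ 2) := Real.sqrt_le_sqrt h2
    _ = Real.sqrt (innerP r p p) * Real.sqrt (innerP r q q) := by
        rw [e2, e3, Real.sqrt_mul (by positivity)]

lemma coeff_pderiv (i : Fin d) (β : Fin d →₀ ℕ) (q : MvP d) :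
    coeff β (pderiv i q) = ((β i : ℝ) + 1) * coeff (β + Finsupp.single i 1) q := by
  induction q using MvPolynomial.induction_on' with
  | add q1 q2 h1 h2 => rw [map_add, coeff_add, h1, h2, coeff_add]; ring
  | monomial γ c =>
    rw [pderiv_monomial, coeff_monomial, coeff_monomial]
    by_cases hc : γ = β + Finsupp.single i 1
    · rw [if_pos hc, if_pos]
      · have : γ i = β i + 1 := by rw [hc]; simp
        rw [this]; push_cast; ring
      · rw [hc, add_tsub_cancel_right]
    · rw [if_neg hc, mul_zero]
      by_cases hgi : γ i = 0
      · by_cases h2 : γ - Finsupp.single i 1 = β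
        · rw [if_pos h2, hgi]; norm_num
        · rw [if_neg h2]
      · rw [if_neg]
        intro h2
        apply hc
        rw [← h2, add_comm, add_tsub_cancel_of_le]
        rwa [Finsupp.single_le_iff, Nat.one_le_iff_ne_zero]

lemma w_add_single (r : ℝ) (β : Fin d →₀ ℕ) (i : Fin d) :
    w r (β + Finsupp.single i 1) = r ^ 2 * ((β i : ℝ) + 1) * w r β := by
  rw [w, w]
  have h1 : ∑ j : Fin d, (β + Finsupp.single i 1 : Fin d →₀ ℕ) j = (∑ j : Fin d, β j) + 1 := by
    simp only [Finsupp.add_apply, Finset.sum_add_distrib]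
    congr 1
    rw [Finset.sum_congr rfl (fun j _ => Finsupp.single_apply)]
    simp
  have h2 : ∏ j : Fin d, (((β + Finsupp.single i 1 : Fin d →₀ ℕ) j).factorial : ℝ)
      = ((β i : ℝ) + 1) * ∏ j : Fin d, ((β j).factorial : ℝ) := by
    rw [Finset.prod_eq_prod_diff_singleton_mul (Finset.mem_univ i),
      Finset.prod_eq_prod_diff_singleton_mul (Finset.mem_univ i)
        (fun j => ((β j).factorial : ℝ))]
    have hoff : ∀ j ∈ Finset.univ \ {i}, (((β + Finsupp.single i 1 : Fin d →₀ ℕ) j).factorial : ℝ)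
        = ((β j).factorial : ℝ) := by
      intro j hj
      rw [Finset.mem_sdiff, Finset.mem_singleton] at hj
      rw [Finsupp.add_apply, Finsupp.single_apply, if_neg (Ne.symm hj.2), add_zero]
    rw [Finset.prod_congr rfl hoff]
    have : (β + Finsupp.single i 1 : Fin d →₀ ℕ) i = β i + 1 := by simp
    rw [this, Nat.factorial_succ]
    push_cast
    ring
  rw [h1, h2, Nat.mul_add, pow_add]
  ring_nf

lemma innerP_X_mul (r : ℝ) (i : Fin d) (p q : MvP d) :
    innerP r (X i * p) q = r ^ 2 * innerP r p (pderiv i q) := by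
  induction p using MvPolynomial.induction_on' with
  | add p1 p2 h1 h2 => rw [mul_add, innerP_add_left, h1, h2, innerP_add_left]; ring
  | monomial β b =>
    have : X i * monomial β b = monomial (β + Finsupp.single i 1) b := by
      rw [X, monomial_mul, one_mul, add_comm]
    rw [this, innerP_monomial_left, innerP_monomial_left, coeff_pderiv, w_add_single]
    ring

noncomputable def normSq (d : ℕ) : MvP d := ∑ i, X i ^ 2

lemma lap'_apply (q : MvP d) : lap' q = ∑ i, pderiv i (pderiv i q) := by
  rw [lap', LinearMap.sum_apply]
  exact Finset.sum_congr rfl fun i _ => by rw [pow_two, Module.End.mul_apply]; rfl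

lemma pderiv_normSq (j : Fin d) : pderiv j (normSq d) = (2 : MvP d) * X j := by
  rw [normSq, map_sum]
  have h : ∀ i : Fin d, pderiv j (X i ^ 2) = if i = j then (2 : MvP d) * X j else 0 := by
    intro i
    by_cases h : i = j
    · subst h; rw [if_pos rfl, pow_two, pderiv_mul, pderiv_X_self]; ring
    · rw [if_neg h, pow_two, pderiv_mul, pderiv_X_of_ne h]; ring
  rw [Finset.sum_congr rfl fun i _ => h i,
    Finset.sum_ite_eq' Finset.univ j fun _ => (2 : MvP d) * X j, if_pos (Finset.mem_univ j)]

lemma lap'_normSq_mul (p : MvP d) :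
    lap' (normSq d * p) = normSq d * lap' p + 4 * (∑ i, X i * pderiv i p)
      + ((2 * d : ℕ) : MvP d) * p := by
  rw [lap'_apply, lap'_apply]
  have step : ∀ i : Fin d, pderiv i (pderiv i (normSq d * p))
      = 2 * p + 4 * (X i * pderiv i p) + normSq d * pderiv i (pderiv i p) := by
    intro i
    have e1 : pderiv i (normSq d * p) = X i * p + X i * p + normSq d * pderiv i p := by
      rw [pderiv_mul, pderiv_normSq]; ring
    rw [e1, map_add, map_add, pderiv_mul, pderiv_mul, pderiv_normSq, pderiv_X_self]
    ring
  rw [Finset.sum_congr rfl fun i _ => step i, Finset.sum_add_distrib, Finset.sum_add_distrib,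
    Finset.sum_const, Finset.card_univ, Fintype.card_fin, nsmul_eq_mul]
  simp only [← Finset.mul_sum]
  push_cast
  ring

lemma degree_eq_sum_univ (β : Fin d →₀ ℕ) : β.degree = ∑ i, β i :=
  Finset.sum_subset (Finset.subset_univ _) fun _ _ hx => Finsupp.notMem_support_iff.mp hx

lemma isHomog_degree {p : MvP d} {m : ℕ} (hp : p.IsHomogeneous m) {β : Fin d →₀ ℕ}
    (hc : coeff β p ≠ 0) : β.degree = m := by
  rw [Finsupp.degree_eq_weight_one]
  exact hp hc

lemma natCast_mul_eq_smul (n : ℕ) (p : MvP d) : ((n : ℕ) : MvP d) * p = (n : ℝ) • p := by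
  rw [← MvPolynomial.C_eq_coe_nat, C_mul']

lemma euler_monomial (i : Fin d) (β : Fin d →₀ ℕ) (c : ℝ) :
    X i * pderiv i (monomial β c) = ((β i : ℕ) : MvP d) * monomial β c := by
  rw [pderiv_monomial]
  by_cases h : β i = 0
  · rw [h]; simp
  · rw [show (X i : MvP d) = monomial (Finsupp.single i 1) 1 from rfl, monomial_mul,
      add_tsub_cancel_of_le (by rwa [Finsupp.single_le_iff, Nat.one_le_iff_ne_zero]),
      natCast_mul_eq_smul, smul_monomial]
    congr 1
    rw [smul_eq_mul]
    ring

lemma euler_eq {p : MvP d} {m : ℕ} (hp : p.IsHomogeneous m) :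
    ∑ i, X i * pderiv i p = ((m : ℕ) : MvP d) * p := by
  conv_lhs => rw [p.as_sum]
  have key : ∀ i : Fin d, X i * pderiv i (∑ β ∈ p.support, monomial β (coeff β p))
      = ∑ β ∈ p.support, ((β i : ℕ) : MvP d) * monomial β (coeff β p) := by
    intro i
    rw [map_sum, Finset.mul_sum]
    exact Finset.sum_congr rfl fun β _ => euler_monomial i β (coeff β p)
  rw [Finset.sum_congr rfl fun i _ => key i, Finset.sum_comm]
  conv_rhs => rw [p.as_sum, Finset.mul_sum]
  refine Finset.sum_congr rfl fun β hβ => ?_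
  rw [← Finset.sum_mul, ← Nat.cast_sum]
  congr 2
  rw [← degree_eq_sum_univ]
  exact isHomog_degree hp (mem_support_iff.mp hβ)

lemma normSq_isHomog : (normSq d).IsHomogeneous 2 := by
  apply IsHomogeneous.sum
  intro i _
  simpa using (isHomogeneous_X ℝ i).pow 2

lemma pderiv_isHomog {p : MvP d} {m : ℕ} (hp : p.IsHomogeneous (m + 1)) (i : Fin d) :
    (pderiv i p).IsHomogeneous m := by
  conv in pderiv i p => rw [p.as_sum]
  rw [map_sum]
  apply IsHomogeneous.sum
  intro β hβ
  rw [pderiv_monomial]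
  by_cases hz : β i = 0
  · rw [hz]
    norm_num
    exact isHomogeneous_zero _ _ _
  · apply isHomogeneous_monomial
    have hle : Finsupp.single i 1 ≤ β := by
      rwa [Finsupp.single_le_iff, Nat.one_le_iff_ne_zero]
    have hβ' : (β - Finsupp.single i 1) + Finsupp.single i 1 = β := tsub_add_cancel_of_le hle
    have h1 : ∑ j : Fin d, (Finsupp.single i 1 : Fin d →₀ ℕ) j = 1 := by
      rw [Finset.sum_congr rfl fun j _ => Finsupp.single_apply]
      simp
    have hβm : ∑ j : Fin d, β j = m + 1 := by
      rw [← degree_eq_sum_univ]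
      exact isHomog_degree hp (mem_support_iff.mp hβ)
    have h2 : (∑ j : Fin d, (β - Finsupp.single i 1 : Fin d →₀ ℕ) j)
        + (∑ j : Fin d, (Finsupp.single i 1 : Fin d →₀ ℕ) j) = ∑ j : Fin d, β j := by
      rw [← Finset.sum_add_distrib]
      conv_rhs => rw [← hβ']
      exact Finset.sum_congr rfl fun j _ => by rw [Finsupp.add_apply]
    rw [degree_eq_sum_univ]
    rw [h1] at h2
    omega

lemma lap'_isHomog {t : MvP d} {m : ℕ} (ht : t.IsHomogeneous (m + 2)) :
    (lap' t).IsHomogeneous m := by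
  rw [lap'_apply]
  apply IsHomogeneous.sum
  intro i _
  exact pderiv_isHomog (pderiv_isHomog ht i) i

instance fdPm (m : ℕ) : FiniteDimensional ℝ (homogeneousSubmodule (Fin d) ℝ m) :=
  Submodule.finiteDimensional_of_le (S₂ := restrictTotalDegree (Fin d) ℝ m)
    (fun p hp => (mem_restrictTotalDegree _ m p).mpr (IsHomogeneous.totalDegree_le hp))

noncomputable def Lfull (d : ℕ) : MvP d →ₗ[ℝ] MvP d :=
  lap' ∘ₗ LinearMap.mulLeft ℝ (normSq d)

lemma Lfull_apply (q : MvP d) : Lfull d q = lap' (normSq d * q) := rfl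

lemma Lfull_mem (m : ℕ) : ∀ q ∈ homogeneousSubmodule (Fin d) ℝ m,
    Lfull d q ∈ homogeneousSubmodule (Fin d) ℝ m := by
  intro q hq
  rw [mem_homogeneousSubmodule] at hq ⊢
  rw [Lfull_apply]
  exact lap'_isHomog (by simpa [add_comm] using normSq_isHomog.mul hq)

lemma innerP_sum_left (r : ℝ) {ι : Type*} (s : Finset ι) (f : ι → MvP d) (q : MvP d) :
    innerP r (∑ i ∈ s, f i) q = ∑ i ∈ s, innerP r (f i) q := by
  induction s using Finset.cons_induction with
  | empty => simpa using innerP_zero_left r q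
  | cons a s ha ih => rw [Finset.sum_cons, Finset.sum_cons, innerP_add_left, ih]

lemma innerP_sum_right (r : ℝ) {ι : Type*} (s : Finset ι) (p : MvP d) (f : ι → MvP d) :
    innerP r p (∑ i ∈ s, f i) = ∑ i ∈ s, innerP r p (f i) := by
  rw [innerP_comm, innerP_sum_left]
  exact Finset.sum_congr rfl fun i _ => innerP_comm r (f i) p

lemma innerP_normSq_mul (r : ℝ) (s t : MvP d) :
    innerP r (normSq d * s) t = r ^ 4 * innerP r s (lap' t) := by
  have h1 : normSq d * s = ∑ i, X i * (X i * s) := by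
    rw [normSq, Finset.sum_mul]
    exact Finset.sum_congr rfl fun i _ => by ring
  rw [h1, innerP_sum_left, lap'_apply, innerP_sum_right, Finset.mul_sum]
  refine Finset.sum_congr rfl fun i _ => ?_
  rw [innerP_X_mul, innerP_X_mul]
  ring

lemma lap'_normSq_mul' (p : MvP d) {m : ℕ} (hp : p.IsHomogeneous m) :
    lap' (normSq d * p) = normSq d * lap' p + (4 * (m : ℝ) + 2 * (d : ℝ)) • p := by
  rw [lap'_normSq_mul, euler_eq hp, natCast_mul_eq_smul, natCast_mul_eq_smul]
  have h4 : (4 : MvP d) = ((4 : ℕ) : MvP d) := by norm_cast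
  rw [h4, natCast_mul_eq_smul, smul_smul]
  push_cast
  rw [add_assoc, ← add_smul]

lemma innerP_L_ge (r : ℝ) (hr : 0 < r) {q : MvP d} {m : ℕ} (hq : q.IsHomogeneous m) :
    (4 * (m : ℝ) + 2 * (d : ℝ)) * innerP r q q ≤ innerP r (lap' (normSq d * q)) q := by
  rw [lap'_normSq_mul' q hq, innerP_add_left, innerP_smul_left, innerP_normSq_mul]
  have h := innerP_self_nonneg hr (lap' q)
  nlinarith [pow_pos hr 4]

theorem main (d : ℕ) (hd : 1 ≤ d) :
    ∃ S : MvPolynomial (Fin d) ℝ →ₗ[ℝ] MvPolynomial (Fin d) ℝ,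
      ∀ (m : ℕ) (p : MvPolynomial (Fin d) ℝ), p.IsHomogeneous m →
        lap' (S p) = p ∧
        ∀ r : ℝ, 0 < r →
          Real.sqrt (innerP r (S p) (S p)) ≤
            r ^ 2 / Real.sqrt (m + 1) * Real.sqrt (innerP r p p) := by
  classical
  letI : DirectSum.Decomposition (homogeneousSubmodule (Fin d) ℝ) := MvPolynomial.decomposition
  have hd' : (1:ℝ) ≤ (d:ℝ) := by exact_mod_cast hd
  set ℳ := homogeneousSubmodule (Fin d) ℝ with hℳ
  let Lm : ∀ m : ℕ, ℳ m →ₗ[ℝ] ℳ m := fun m => (Lfull d).restrict (Lfull_mem m)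
  have hker : ∀ (m : ℕ) (z : ℳ m), Lm m z = 0 → z = 0 := by
    intro m z hz
    have hz' : Lfull d (z : MvP d) = 0 := congrArg Subtype.val hz
    by_contra hz0
    have hzne : (z : MvP d) ≠ 0 := fun h => hz0 (Subtype.ext h)
    have hzh : (z : MvP d).IsHomogeneous m := z.2
    have h1 : (0:ℝ) < innerP 1 (z : MvP d) (z : MvP d) := innerP_self_pos one_pos hzne
    have h2 := innerP_L_ge (d := d) 1 one_pos hzh
    rw [← Lfull_apply, hz', innerP_zero_left] at h2
    have hm0 : (0:ℝ) ≤ (m:ℝ) := Nat.cast_nonneg m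
    nlinarith
  have hinj : ∀ m : ℕ, Function.Injective (Lm m) := by
    intro m x y hxy
    have := hker m (x - y) (by rw [map_sub, hxy, sub_self])
    rwa [sub_eq_zero] at this
  have hbij : ∀ m, Function.Bijective (Lm m) := fun m =>
    ⟨hinj m, (LinearMap.injective_iff_surjective).mp (hinj m)⟩
  let E : ∀ m, ℳ m ≃ₗ[ℝ] ℳ m := fun m => LinearEquiv.ofBijective (Lm m) (hbij m)
  let Sm : ∀ m, ℳ m →ₗ[ℝ] MvP d := fun m =>
    (LinearMap.mulLeft ℝ (normSq d)) ∘ₗ ((ℳ m).subtype ∘ₗ ((E m).symm : ℳ m →ₗ[ℝ] ℳ m))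
  refine ⟨(DirectSum.toModule ℝ ℕ (MvP d) Sm) ∘ₗ
    (DirectSum.decomposeLinearEquiv ℳ).toLinearMap, ?_⟩
  intro m p hp
  have hpmem : p ∈ ℳ m := hp
  set z : ℳ m := (E m).symm ⟨p, hpmem⟩ with hzdef
  set q : MvP d := (z : MvP d) with hqdef
  have hq : q.IsHomogeneous m := z.2
  have hSp : ((DirectSum.toModule ℝ ℕ (MvP d) Sm) ∘ₗ
      (DirectSum.decomposeLinearEquiv ℳ).toLinearMap) p = normSq d * q := by
    rw [LinearMap.comp_apply]
    rw [show (DirectSum.decomposeLinearEquiv ℳ).toLinearMap p = DirectSum.decompose ℳ p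
      from DirectSum.decomposeLinearEquiv_apply ℳ p]
    rw [DirectSum.decompose_of_mem ℳ hpmem, ← DirectSum.lof_eq_of ℝ, DirectSum.toModule_lof]
    rfl
  have hlap : lap' (normSq d * q) = p := by
    have h1 : Lm m z = ⟨p, hpmem⟩ := by
      show (E m) z = _
      rw [hzdef, LinearEquiv.apply_symm_apply]
    have h2 := congrArg Subtype.val h1
    exact h2
  rw [hSp]
  refine ⟨hlap, ?_⟩
  intro r hr
  have hnq : 0 ≤ innerP r q q := innerP_self_nonneg hr q
  have hnp : 0 ≤ innerP r p p := innerP_self_nonneg hr p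
  have ha : innerP r (normSq d * q) (normSq d * q) = r^4 * innerP r q p := by
    rw [innerP_normSq_mul, hlap]
  have hc_ge : (4*(m:ℝ)+2*(d:ℝ)) * innerP r q q ≤ innerP r q p := by
    have h := innerP_L_ge r hr hq
    rw [hlap] at h
    rw [innerP_comm r q p]
    exact h
  have hKpos : (0:ℝ) < 4*(m:ℝ)+2*(d:ℝ) := by
    have : (0:ℝ) ≤ (m:ℝ) := Nat.cast_nonneg m
    linarith
  have hc0 : 0 ≤ innerP r q p := le_trans (mul_nonneg hKpos.le hnq) hc_ge
  have hcs : innerP r q p ≤ Real.sqrt (innerP r q q) * Real.sqrt (innerP r p p) :=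
    innerP_cauchy hr q p
  have hc2 : (innerP r q p)^2 ≤ innerP r q q * innerP r p p := by
    have h := pow_le_pow_left₀ hc0 hcs 2
    rwa [mul_pow, Real.sq_sqrt hnq, Real.sq_sqrt hnp] at h
  have hKc : (4*(m:ℝ)+2*(d:ℝ)) * innerP r q p ≤ innerP r p p := by
    rcases eq_or_lt_of_le hc0 with h|h
    · rw [← h, mul_zero]; exact hnp
    · nlinarith [mul_le_mul_of_nonneg_right hc_ge hnp,
        mul_le_mul_of_nonneg_left hc2 hKpos.le]
  have hm10 : (0:ℝ) ≤ (m:ℝ)+1 := by positivity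
  have hm1K : (m:ℝ) + 1 ≤ 4*(m:ℝ)+2*(d:ℝ) := by
    have : (0:ℝ) ≤ (m:ℝ) := Nat.cast_nonneg m
    linarith
  have hgoal2 : r^4 * innerP r q p ≤ r^4/((m:ℝ)+1) * innerP r p p := by
    have h1 : innerP r q p ≤ innerP r p p / (4*(m:ℝ)+2*(d:ℝ)) :=
      (le_div_iff₀ hKpos).mpr (by linarith [hKc])
    have h2 : innerP r p p / (4*(m:ℝ)+2*(d:ℝ)) ≤ innerP r p p / ((m:ℝ)+1) := by
      gcongr
    calc r^4 * innerP r q p ≤ r^4 * (innerP r p p / (4*(m:ℝ)+2*(d:ℝ))) := by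
          exact mul_le_mul_of_nonneg_left h1 (by positivity)
      _ ≤ r^4 * (innerP r p p / ((m:ℝ)+1)) := mul_le_mul_of_nonneg_left h2 (by positivity)
      _ = r^4/((m:ℝ)+1) * innerP r p p := by ring
  have hrhs0 : 0 ≤ r^2 / Real.sqrt ((m:ℝ)+1) * Real.sqrt (innerP r p p) := by positivity
  have hrhs : (r^2 / Real.sqrt ((m:ℝ)+1) * Real.sqrt (innerP r p p))^2
      = r^4/((m:ℝ)+1) * innerP r p p := by
    rw [mul_pow, div_pow, Real.sq_sqrt hm10, Real.sq_sqrt hnp]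
    ring
  calc Real.sqrt (innerP r (normSq d * q) (normSq d * q))
      ≤ Real.sqrt ((r^2 / Real.sqrt ((m:ℝ)+1) * Real.sqrt (innerP r p p))^2) := by
        apply Real.sqrt_le_sqrt
        rw [hrhs, ha]
        exact hgoal2
    _ = r^2 / Real.sqrt ((m:ℝ)+1) * Real.sqrt (innerP r p p) := Real.sqrt_sq hrhs0


end ALap

/-- There is a linear right inverse `S` of the Laplacian on polynomials such that for every
homogeneous polynomial `p` of degree `m` and every `r > 0`, `Δ(Sp) = p` and
`‖Sp‖_{P_r} ≤ (r²/√(m+1)) ‖p‖_{P_r}`. -/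
theorem exists_linear_right_inverse_laplacian (d : ℕ) (hd : 1 ≤ d) :
    ∃ S : MvPolynomial (Fin d) ℝ →ₗ[ℝ] MvPolynomial (Fin d) ℝ,
      ∀ (m : ℕ) (p : MvPolynomial (Fin d) ℝ), p.IsHomogeneous m →
        lap' (S p) = p ∧
        ∀ r : ℝ, 0 < r →
          Real.sqrt (innerP r (S p) (S p)) ≤
            r ^ 2 / Real.sqrt (m + 1) * Real.sqrt (innerP r p p) := by
  exact ALap.main d hd
end

section
/- For every polynomial p of degree at most m on ℝ^d, ∫_{ℝ^d} |∇(p Γ)|² / Γ dx ≤ (2(m+d)/t) ∫_{ℝ^d} p² Γ dx, where Γ(x) = Γ(t, x−y) = (4πt)^{-d/2} exp(−|x−y|²/(4t)) is the heat kernel centered at y at time t > 0. -/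
open MeasureTheory MvPolynomial

/-- Partial derivative in the `i`-th coordinate direction. -/
noncomputable def pder {d : ℕ} (i : Fin d) (f : (Fin d → ℝ) → ℝ) : (Fin d → ℝ) → ℝ :=
  fun x => fderiv ℝ f x (Pi.single i 1)

/-- The heat kernel `Γ(t,x) = (4πt)^{-d/2} exp(-|x|²/(4t))`. -/
noncomputable def heatK (d : ℕ) (t : ℝ) (x : Fin d → ℝ) : ℝ :=
  (4 * Real.pi * t) ^ (-(d : ℝ) / 2) * Real.exp (-(∑ i, x i ^ 2) / (4 * t))

namespace WGE

open Real Filter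

/-! ### One-dimensional Gaussian moments -/

noncomputable def M (t : ℝ) (k : ℕ) : ℝ := ∫ s : ℝ, s ^ k * Real.exp (-(4 * t)⁻¹ * s ^ 2)

lemma intM {t : ℝ} (ht : 0 < t) (k : ℕ) :
    Integrable (fun s : ℝ => s ^ k * Real.exp (-(4 * t)⁻¹ * s ^ 2)) := by
  have hb : (0:ℝ) < (4 * t)⁻¹ := by positivity
  have hs : (-1:ℝ) < (k:ℝ) := lt_of_lt_of_le (by norm_num) (Nat.cast_nonneg k)
  simpa [Real.rpow_natCast] using integrable_rpow_mul_exp_neg_mul_sq hb hs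

lemma tendsto_pow_gauss_top {t : ℝ} (ht : 0 < t) (k : ℕ) :
    Tendsto (fun s : ℝ => s ^ k * Real.exp (-(4 * t)⁻¹ * s ^ 2)) atTop (nhds 0) := by
  have hb : (0:ℝ) < (4 * t)⁻¹ := by positivity
  have hlim : Tendsto (fun x : ℝ => Real.exp (-(1/2) * x)) atTop (nhds 0) := by
    apply Real.tendsto_exp_atBot.comp
    exact Tendsto.const_mul_atTop_of_neg (by norm_num : -(1/2 : ℝ) < 0) tendsto_id
  have h := (rpow_mul_exp_neg_mul_sq_isLittleO_exp_neg hb (k:ℝ)).tendsto_zero_of_tendsto hlim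
  have heq : (fun x : ℝ => x ^ (k:ℝ) * Real.exp (-(4 * t)⁻¹ * x ^ 2))
      = fun x : ℝ => x ^ k * Real.exp (-(4 * t)⁻¹ * x ^ 2) := by
    funext x; rw [Real.rpow_natCast]
  rwa [heq] at h

lemma tendsto_pow_gauss_bot {t : ℝ} (ht : 0 < t) (k : ℕ) :
    Tendsto (fun s : ℝ => s ^ k * Real.exp (-(4 * t)⁻¹ * s ^ 2)) atBot (nhds 0) := by
  have h1 : Tendsto (fun s : ℝ => ((-1:ℝ))^k * (s ^ k * Real.exp (-(4 * t)⁻¹ * s ^ 2)))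
      atTop (nhds 0) := by
    simpa using (tendsto_pow_gauss_top ht k).const_mul ((-1:ℝ)^k)
  have h2 : Tendsto (fun s : ℝ => (-s) ^ k * Real.exp (-(4 * t)⁻¹ * (-s) ^ 2))
      atTop (nhds 0) := by
    refine h1.congr fun s => ?_
    rw [neg_pow, neg_sq]; ring
  have := h2.comp tendsto_neg_atBot_atTop
  refine this.congr fun s => ?_
  simp [Function.comp]

lemma hM {t : ℝ} (ht : 0 < t) (k : ℕ) :
    (k : ℝ) * M t (k - 1) = (2 * t)⁻¹ * M t (k + 1) := by
  have ht4 : (4:ℝ) * t ≠ 0 := by positivity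
  set b : ℝ := (4 * t)⁻¹ with hbdef
  have hb : (0:ℝ) < b := by rw [hbdef]; positivity
  set f : ℝ → ℝ := fun s => s ^ k * Real.exp (-b * s ^ 2) with hf
  set g : ℝ → ℝ := fun s =>
    (k:ℝ) * (s ^ (k-1) * Real.exp (-b * s ^ 2)) - (2*b) * (s ^ (k+1) * Real.exp (-b * s ^ 2))
    with hg
  have hder : ∀ s : ℝ, HasDerivAt f (g s) s := by
    intro s
    have h1 : HasDerivAt (fun s : ℝ => s ^ k) ((k:ℝ) * s ^ (k-1)) s := hasDerivAt_pow k s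
    have h2 : HasDerivAt (fun s : ℝ => -b * s ^ 2) (-b * (2 * s ^ 1)) s := by
      simpa using ((hasDerivAt_pow 2 s).const_mul (-b))
    have h3 := h2.exp
    have h4 := h1.mul h3
    refine HasDerivAt.congr_deriv h4 ?_
    symm
    rw [hg]
    cases k with
    | zero => norm_num; ring
    | succ n =>
      simp only [Nat.succ_sub_one]
      push_cast
      rw [pow_succ]
      ring
  have hint : Integrable g := by
    refine Integrable.sub ?_ ?_
    · exact (intM ht (k-1)).const_mul _
    · exact (intM ht (k+1)).const_mul _
  have hIic := integral_Iic_of_hasDerivAt_of_tendsto' (a := (0:ℝ))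
    (fun x _ => hder x) hint.integrableOn (tendsto_pow_gauss_bot ht k)
  have hIoi := integral_Ioi_of_hasDerivAt_of_tendsto' (a := (0:ℝ))
    (fun x _ => hder x) hint.integrableOn (tendsto_pow_gauss_top ht k)
  have htot := intervalIntegral.integral_Iic_add_Ioi (b := (0:ℝ)) (f := g) (μ := volume)
    hint.integrableOn hint.integrableOn
  have hzero : (∫ s : ℝ, g s) = 0 := by
    rw [← htot, hIic, hIoi]; ring
  rw [hg] at hzero
  rw [integral_sub ((intM ht (k-1)).const_mul _) ((intM ht (k+1)).const_mul _),
    integral_const_mul, integral_const_mul] at hzero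
  have h2b : 2 * b = (2*t)⁻¹ := by
    rw [hbdef]; field_simp; ring
  simp only [M]
  rw [← h2b]
  linarith [hzero]

/-! ### Polynomial lemmas -/

variable {d : ℕ}

lemma coeff_pderiv (i : Fin d) (p : MvPolynomial (Fin d) ℝ) (β : Fin d →₀ ℕ) :
    coeff β (pderiv i p) = coeff (β + Finsupp.single i 1) p * ((β i : ℝ) + 1) := by
  classical
  induction p using MvPolynomial.induction_on' with
  | monomial α a =>
    rw [pderiv_monomial, coeff_monomial, coeff_monomial]
    by_cases h : α = β + Finsupp.single i 1
    · subst h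
      rw [if_pos (add_tsub_cancel_right β (Finsupp.single i 1)), if_pos rfl]
      rw [Finsupp.add_apply, Finsupp.single_eq_same]
      push_cast; ring
    · rw [if_neg h]
      by_cases h2 : α - Finsupp.single i 1 = β
      · rw [if_pos h2]
        have hαi : α i = 0 := by
          by_contra hne
          apply h
          have hle : Finsupp.single i 1 ≤ α :=
            Finsupp.single_le_iff.2 (Nat.one_le_iff_ne_zero.2 hne)
          rw [← h2, tsub_add_cancel_of_le hle]
        simp [hαi]
      · rw [if_neg h2]; simp
  | add p q hp hq =>
    simp only [map_add, coeff_add, hp, hq]; ring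

lemma pderiv_eq_zero_of_deg_zero {p : MvPolynomial (Fin d) ℝ}
    (h : p.totalDegree = 0) (i : Fin d) : pderiv i p = 0 := by
  apply MvPolynomial.ext
  intro β
  rw [coeff_pderiv]
  have hc : coeff (β + Finsupp.single i 1) p = 0 := by
    by_contra hne
    have hmem := MvPolynomial.mem_support_iff.2 hne
    have := (MvPolynomial.totalDegree_eq_zero_iff _ p).1 h _ hmem i
    simp [Finsupp.add_apply, Finsupp.single_eq_same] at this
  simp [hc]

lemma totalDegree_pderiv_le (i : Fin d) (p : MvPolynomial (Fin d) ℝ) {m : ℕ}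
    (h : p.totalDegree ≤ m + 1) : (pderiv i p).totalDegree ≤ m := by
  rw [MvPolynomial.totalDegree]
  apply Finset.sup_le
  intro β hβ
  have hne := MvPolynomial.mem_support_iff.1 hβ
  rw [coeff_pderiv] at hne
  have hco : coeff (β + Finsupp.single i 1) p ≠ 0 := by
    intro h0; exact hne (by rw [h0]; ring)
  have hle := MvPolynomial.le_totalDegree (MvPolynomial.mem_support_iff.2 hco)
  have hsum : ((β + Finsupp.single i 1).sum fun _ e => e)
      = (β.sum fun _ e => e) + 1 := by
    rw [Finsupp.sum_add_index' (fun _ => rfl) (fun _ _ _ => rfl),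
      Finsupp.sum_single_index rfl]
  omega

lemma sub_single_apply (γ : Fin d →₀ ℕ) (u v : Fin d) (huv : u ≠ v) :
    (γ - Finsupp.single u 1 : Fin d →₀ ℕ) v = γ v := by
  rw [Finsupp.tsub_apply, Finsupp.single_apply, if_neg huv, Nat.sub_zero]

lemma pderiv_pderiv_comm (i j : Fin d) (p : MvPolynomial (Fin d) ℝ) :
    pderiv i (pderiv j p) = pderiv j (pderiv i p) := by
  classical
  induction p using MvPolynomial.induction_on' with
  | monomial α a =>
    rcases eq_or_ne i j with rfl | hij
    · rfl
    · rw [pderiv_monomial, pderiv_monomial, pderiv_monomial, pderiv_monomial,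
        sub_single_apply α j i (Ne.symm hij), sub_single_apply α i j hij,
        tsub_tsub, tsub_tsub, add_comm (Finsupp.single j 1) (Finsupp.single i 1)]
      congr 1
      ring
  | add p q hp hq => simp only [map_add, hp, hq]

lemma deg_aeval_le (y : Fin d → ℝ) (p : MvPolynomial (Fin d) ℝ) :
    (MvPolynomial.aeval (fun i => (X i : MvPolynomial (Fin d) ℝ) + C (y i)) p).totalDegree
      ≤ p.totalDegree := by
  rw [MvPolynomial.aeval_def, MvPolynomial.eval₂_eq]
  refine le_trans (MvPolynomial.totalDegree_finset_sum _ _) ?_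
  apply Finset.sup_le
  intro α hα
  refine le_trans (MvPolynomial.totalDegree_mul _ _) ?_
  rw [MvPolynomial.algebraMap_eq, MvPolynomial.totalDegree_C, zero_add]
  refine le_trans (MvPolynomial.totalDegree_finset_prod _ _) ?_
  have hterm : ∀ i ∈ α.support,
      (((X i : MvPolynomial (Fin d) ℝ) + C (y i)) ^ (α i)).totalDegree ≤ α i := by
    intro i _
    refine le_trans (MvPolynomial.totalDegree_pow _ _) ?_
    have h1 : ((X i : MvPolynomial (Fin d) ℝ) + C (y i)).totalDegree ≤ 1 := by
      refine le_trans (MvPolynomial.totalDegree_add _ _) ?_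
      simp [MvPolynomial.totalDegree_X, MvPolynomial.totalDegree_C]
    calc α i * ((X i : MvPolynomial (Fin d) ℝ) + C (y i)).totalDegree
        ≤ α i * 1 := Nat.mul_le_mul_left _ h1
      _ = α i := mul_one _
  refine le_trans (Finset.sum_le_sum hterm) ?_
  exact MvPolynomial.le_totalDegree hα

/-! ### Gaussian integrals of polynomials -/

lemma heatK_pos {t : ℝ} (ht : 0 < t) (x : Fin d → ℝ) : 0 < heatK d t x := by
  rw [heatK]
  have h4 : (0:ℝ) < 4 * Real.pi * t := by positivity
  positivity

lemma heatK_eq_prod (t : ℝ) (x : Fin d → ℝ) :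
    heatK d t x = (4 * Real.pi * t) ^ (-(d:ℝ)/2)
      * ∏ i, Real.exp (-(4 * t)⁻¹ * (x i) ^ 2) := by
  rw [heatK, ← Real.exp_sum]
  congr 1
  rw [neg_div, Finset.sum_div, ← Finset.sum_neg_distrib]
  congr 1
  exact Finset.sum_congr rfl fun i _ => by ring

lemma monomial_integrand (t : ℝ) (α : Fin d →₀ ℕ) (a : ℝ) (x : Fin d → ℝ) :
    eval x (monomial α a) * heatK d t x
      = ((4 * Real.pi * t) ^ (-(d:ℝ)/2) * a)
        * ∏ i, ((x i) ^ (α i) * Real.exp (-(4 * t)⁻¹ * (x i) ^ 2)) := by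
  rw [eval_monomial, heatK_eq_prod, Finsupp.prod_fintype _ _ (fun i => pow_zero _),
    Finset.prod_mul_distrib]
  ring

lemma integrable_poly {t : ℝ} (ht : 0 < t) (q : MvPolynomial (Fin d) ℝ) :
    Integrable (fun x : Fin d → ℝ => eval x q * heatK d t x) := by
  induction q using MvPolynomial.induction_on' with
  | monomial α a =>
    have h : (fun x : Fin d → ℝ => eval x (monomial α a) * heatK d t x)
        = fun x => ((4 * Real.pi * t) ^ (-(d:ℝ)/2) * a)
            * ∏ i, ((x i) ^ (α i) * Real.exp (-(4 * t)⁻¹ * (x i) ^ 2)) :=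
      funext fun x => monomial_integrand t α a x
    rw [h]
    exact (Integrable.fintype_prod
      (f := fun i (s : ℝ) => s ^ (α i) * Real.exp (-(4 * t)⁻¹ * s ^ 2))
      (fun i => intM ht (α i))).const_mul _
  | add p q hp hq =>
    have h : (fun x : Fin d → ℝ => eval x (p + q) * heatK d t x)
        = fun x => eval x p * heatK d t x + eval x q * heatK d t x :=
      funext fun x => by rw [map_add, add_mul]
    rw [h]; exact hp.add hq

lemma integral_monomial {t : ℝ} (ht : 0 < t) (α : Fin d →₀ ℕ) (a : ℝ) :
    ∫ x : Fin d → ℝ, eval x (monomial α a) * heatK d t x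
      = (4 * Real.pi * t) ^ (-(d:ℝ)/2) * a * ∏ i, M t (α i) := by
  have h : (fun x : Fin d → ℝ => eval x (monomial α a) * heatK d t x)
      = fun x => ((4 * Real.pi * t) ^ (-(d:ℝ)/2) * a)
          * ∏ i, ((x i) ^ (α i) * Real.exp (-(4 * t)⁻¹ * (x i) ^ 2)) :=
    funext fun x => monomial_integrand t α a x
  rw [h, integral_const_mul,
    integral_fintype_prod_volume_eq_prod (𝕜 := ℝ)
      (f := fun i (s : ℝ) => s ^ (α i) * Real.exp (-(4 * t)⁻¹ * s ^ 2))]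
  rfl

/-- Gaussian integration by parts. -/
lemma key {t : ℝ} (ht : 0 < t) (i : Fin d) (q : MvPolynomial (Fin d) ℝ) :
    ∫ x : Fin d → ℝ, eval x (pderiv i q) * heatK d t x
      = (2 * t)⁻¹ * ∫ x : Fin d → ℝ, eval x (X i * q) * heatK d t x := by
  induction q using MvPolynomial.induction_on' with
  | monomial α a =>
    rw [pderiv_monomial]
    have hXm : (X i : MvPolynomial (Fin d) ℝ) * monomial α a
        = monomial (α + Finsupp.single i 1) a := by
      rw [MvPolynomial.X, MvPolynomial.monomial_mul, one_mul, add_comm]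
    rw [hXm, integral_monomial ht, integral_monomial ht]
    rw [← Finset.mul_prod_erase Finset.univ _ (Finset.mem_univ i),
      ← Finset.mul_prod_erase Finset.univ _ (Finset.mem_univ i)]
    have hrest : ∀ j ∈ Finset.univ.erase i,
        M t ((α - Finsupp.single i 1 : Fin d →₀ ℕ) j) = M t (α j) := by
      intro j hj
      rw [sub_single_apply α i j (Finset.ne_of_mem_erase hj).symm]
    have hrest2 : ∀ j ∈ Finset.univ.erase i,
        M t ((α + Finsupp.single i 1 : Fin d →₀ ℕ) j) = M t (α j) := by
      intro j hj
      rw [Finsupp.add_apply, Finsupp.single_apply,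
        if_neg ((Finset.ne_of_mem_erase hj).symm), Nat.add_zero]
    rw [Finset.prod_congr rfl hrest, Finset.prod_congr rfl hrest2]
    have hii : (α - Finsupp.single i 1 : Fin d →₀ ℕ) i = α i - 1 := by
      rw [Finsupp.tsub_apply, Finsupp.single_eq_same]
    have hii2 : (α + Finsupp.single i 1 : Fin d →₀ ℕ) i = α i + 1 := by
      rw [Finsupp.add_apply, Finsupp.single_eq_same]
    rw [hii, hii2]
    have hm := hM ht (α i)
    push_cast
    linear_combination ((4 * Real.pi * t) ^ (-(d:ℝ)/2) * a
      * ∏ j ∈ Finset.univ.erase i, M t (α j)) * hm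
  | add p q hp hq =>
    have e1 : (fun x : Fin d → ℝ => eval x (pderiv i (p + q)) * heatK d t x)
        = fun x => eval x (pderiv i p) * heatK d t x + eval x (pderiv i q) * heatK d t x :=
      funext fun x => by rw [map_add, map_add, add_mul]
    have e2 : (fun x : Fin d → ℝ => eval x (X i * (p + q)) * heatK d t x)
        = fun x => eval x (X i * p) * heatK d t x + eval x (X i * q) * heatK d t x :=
      funext fun x => by rw [mul_add, map_add, add_mul]
    rw [e1, e2, integral_add (integrable_poly ht _) (integrable_poly ht _),
      integral_add (integrable_poly ht _) (integrable_poly ht _), hp, hq]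
    ring

/-! ### The bilinear form -/

noncomputable def ip (d : ℕ) (t : ℝ) (u w : MvPolynomial (Fin d) ℝ) : ℝ :=
  ∫ x : Fin d → ℝ, eval x (u * w) * heatK d t x

noncomputable def crea (d : ℕ) (t : ℝ) (i : Fin d) (u : MvPolynomial (Fin d) ℝ) :
    MvPolynomial (Fin d) ℝ :=
  C (2 * t)⁻¹ * (X i * u) - pderiv i u

variable {t : ℝ}

lemma ip_comm (u w : MvPolynomial (Fin d) ℝ) : ip d t u w = ip d t w u := by
  rw [ip, ip, mul_comm]

lemma ip_nonneg (ht : 0 < t) (u : MvPolynomial (Fin d) ℝ) : 0 ≤ ip d t u u := by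
  refine integral_nonneg fun x => ?_
  rw [map_mul]
  exact mul_nonneg (mul_self_nonneg _) (heatK_pos ht x).le

lemma ip_zero_left (w : MvPolynomial (Fin d) ℝ) : ip d t 0 w = 0 := by
  simp [ip]

lemma ip_add_left (ht : 0 < t) (u v w : MvPolynomial (Fin d) ℝ) :
    ip d t (u + v) w = ip d t u w + ip d t v w := by
  rw [ip, ip, ip]
  have h : (fun x : Fin d → ℝ => eval x ((u + v) * w) * heatK d t x)
      = fun x => eval x (u * w) * heatK d t x + eval x (v * w) * heatK d t x :=
    funext fun x => by rw [add_mul, map_add, add_mul]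
  rw [h, integral_add (integrable_poly ht _) (integrable_poly ht _)]

lemma ip_C_mul_left (c : ℝ) (u w : MvPolynomial (Fin d) ℝ) :
    ip d t (C c * u) w = c * ip d t u w := by
  rw [ip, ip]
  have h : (fun x : Fin d → ℝ => eval x (C c * u * w) * heatK d t x)
      = fun x => c * (eval x (u * w) * heatK d t x) :=
    funext fun x => by rw [mul_assoc, map_mul, eval_C]; ring
  rw [h, integral_const_mul]

lemma ip_add_right (ht : 0 < t) (u v w : MvPolynomial (Fin d) ℝ) :
    ip d t u (v + w) = ip d t u v + ip d t u w := by
  rw [ip_comm, ip_add_left ht, ip_comm u v, ip_comm u w]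

lemma ip_C_mul_right (c : ℝ) (u w : MvPolynomial (Fin d) ℝ) :
    ip d t u (C c * w) = c * ip d t u w := by
  rw [ip_comm, ip_C_mul_left, ip_comm]

lemma ip_sum_left (ht : 0 < t) {ι : Type*} (s : Finset ι)
    (f : ι → MvPolynomial (Fin d) ℝ) (w : MvPolynomial (Fin d) ℝ) :
    ip d t (∑ j ∈ s, f j) w = ∑ j ∈ s, ip d t (f j) w := by
  classical
  induction s using Finset.induction_on with
  | empty => simp [ip_zero_left]
  | insert _ _ hx ih =>
    rw [Finset.sum_insert hx, Finset.sum_insert hx, ip_add_left ht, ih]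

lemma ip_sum_right (ht : 0 < t) {ι : Type*} (s : Finset ι)
    (f : ι → MvPolynomial (Fin d) ℝ) (w : MvPolynomial (Fin d) ℝ) :
    ip d t w (∑ j ∈ s, f j) = ∑ j ∈ s, ip d t w (f j) := by
  rw [ip_comm, ip_sum_left ht]
  exact Finset.sum_congr rfl fun j _ => ip_comm _ _

/-- The adjoint identity: `crea` is adjoint to `pderiv`. -/
lemma adj (ht : 0 < t) (i : Fin d) (u w : MvPolynomial (Fin d) ℝ) :
    ip d t (crea d t i u) w = ip d t u (pderiv i w) := by
  have hexp : crea d t i u * w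
      = C (2 * t)⁻¹ * (X i * (u * w)) - pderiv i (u * w) + u * pderiv i w := by
    rw [crea, pderiv_mul]; ring
  rw [ip, hexp]
  have h : (fun x : Fin d → ℝ =>
      eval x (C (2 * t)⁻¹ * (X i * (u * w)) - pderiv i (u * w) + u * pderiv i w) * heatK d t x)
      = fun x => (eval x (C (2 * t)⁻¹ * (X i * (u * w))) * heatK d t x
          - eval x (pderiv i (u * w)) * heatK d t x)
          + eval x (u * pderiv i w) * heatK d t x :=
    funext fun x => by rw [map_add, map_sub]; ring
  have hint1 : Integrable (fun x : Fin d → ℝ =>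
      eval x (C (2 * t)⁻¹ * (X i * (u * w))) * heatK d t x
        - eval x (pderiv i (u * w)) * heatK d t x) :=
    (integrable_poly ht _).sub (integrable_poly ht _)
  rw [h, integral_add hint1 (integrable_poly ht _),
    integral_sub (integrable_poly ht _) (integrable_poly ht _)]
  have hC : (fun x : Fin d → ℝ => eval x (C (2 * t)⁻¹ * (X i * (u * w))) * heatK d t x)
      = fun x => (2 * t)⁻¹ * (eval x (X i * (u * w)) * heatK d t x) :=
    funext fun x => by rw [map_mul, eval_C]; ring
  rw [hC, integral_const_mul, ← key ht i (u * w), ip]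
  ring

lemma pderiv_crea (i j : Fin d) (u : MvPolynomial (Fin d) ℝ) :
    pderiv i (crea d t j u)
      = crea d t j (pderiv i u) + if i = j then C (2 * t)⁻¹ * u else 0 := by
  rw [crea, crea, map_sub, pderiv_C_mul, pderiv_mul, pderiv_pderiv_comm]
  rcases eq_or_ne i j with rfl | hij
  · rw [if_pos rfl, pderiv_X_self]
    ring
  · rw [if_neg hij, pderiv_X_of_ne (Ne.symm hij)]
    ring

lemma ip_crea_crea (ht : 0 < t) (i j : Fin d) (u w : MvPolynomial (Fin d) ℝ) :
    ip d t (crea d t i u) (crea d t j w)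
      = ip d t (pderiv j u) (pderiv i w)
        + (if i = j then (2 * t)⁻¹ * ip d t u w else 0) := by
  rw [adj ht, pderiv_crea, ip_add_right ht]
  congr 1
  · rw [ip_comm, adj ht, ip_comm]
  · rcases eq_or_ne i j with rfl | hij
    · rw [if_pos rfl, if_pos rfl, ip_C_mul_right]
    · rw [if_neg hij, if_neg hij]
      simp [ip, mul_zero]

/-- Cauchy–Schwarz for the (positive semidefinite) form `ip`. -/
lemma ip_CS (ht : 0 < t) (u w : MvPolynomial (Fin d) ℝ) :
    (ip d t u w) ^ 2 ≤ ip d t u u * ip d t w w := by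
  set a := ip d t u u with ha
  set bb := ip d t u w with hbb
  set c := ip d t w w with hc
  have hkey : ∀ l : ℝ, 0 ≤ a + 2 * l * bb + l ^ 2 * c := by
    intro l
    have h := ip_nonneg ht (u + C l * w)
    simp only [ip_add_left ht, ip_add_right ht, ip_C_mul_left, ip_C_mul_right] at h
    rw [ip_comm w u] at h
    nlinarith [h]
  have hcnn : 0 ≤ c := ip_nonneg ht w
  rcases hcnn.eq_or_lt.imp Eq.symm id with h0 | hpos
  · have hb0 : bb = 0 := by
      by_contra hb
      have h := hkey (-((a + 1) / (2 * bb)))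
      rw [h0] at h
      have heq : 2 * (-((a + 1) / (2 * bb))) * bb = -(a + 1) := by
        field_simp
      linarith [h, heq.le, heq.ge]
    rw [hb0]
    norm_num
    exact mul_nonneg (ip_nonneg ht u) hcnn
  · have h := hkey (-(bb / c))
    have hc0 : c ≠ 0 := ne_of_gt hpos
    have hexp : a + 2 * (-(bb / c)) * bb + (-(bb / c)) ^ 2 * c = a - bb ^ 2 / c := by
      field_simp; ring
    rw [hexp] at h
    have h2 : bb ^ 2 / c ≤ a := by linarith
    rw [div_le_iff₀ hpos] at h2
    linarith [h2]

/-- The key spectral bound, by induction on the degree. -/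
lemma grad_bound (ht : 0 < t) :
    ∀ (m : ℕ) (p : MvPolynomial (Fin d) ℝ), p.totalDegree ≤ m →
      ∑ i, ip d t (pderiv i p) (pderiv i p) ≤ (2 * t)⁻¹ * m * ip d t p p := by
  intro m
  induction m with
  | zero =>
    intro p hp
    have h0 : ∀ i : Fin d, pderiv i p = 0 :=
      fun i => pderiv_eq_zero_of_deg_zero (Nat.le_zero.1 hp) i
    simp [h0, ip_zero_left]
  | succ m IH =>
    intro p hp
    set v := ∑ i, ip d t (pderiv i p) (pderiv i p) with hv
    have hvnn : 0 ≤ v := Finset.sum_nonneg fun i _ => ip_nonneg ht _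
    set S := ∑ i, crea d t i (pderiv i p) with hS
    have h1 : ip d t S p = v := by
      rw [hS, ip_sum_left ht]
      exact Finset.sum_congr rfl fun i _ => by rw [adj ht]
    have h2 : ip d t S S
        = (∑ i, ∑ j, ip d t (pderiv j (pderiv i p)) (pderiv i (pderiv j p)))
          + (2 * t)⁻¹ * v := by
      rw [hS, ip_sum_left ht]
      rw [Finset.sum_congr rfl fun i _ => ip_sum_right ht Finset.univ _ _]
      rw [Finset.sum_congr rfl fun i (_ : i ∈ Finset.univ) =>
        Finset.sum_congr rfl fun j (_ : j ∈ Finset.univ) => ip_crea_crea ht i j _ _]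
      rw [Finset.sum_congr rfl fun i (_ : i ∈ Finset.univ) => Finset.sum_add_distrib]
      rw [Finset.sum_add_distrib]
      congr 1
      rw [hv, Finset.mul_sum]
      refine Finset.sum_congr rfl fun i _ => ?_
      rw [Finset.sum_ite_eq Finset.univ i
        (fun j => (2 * t)⁻¹ * ip d t (pderiv i p) (pderiv j p))]
      simp
    have h3 : ∑ i, ∑ j, ip d t (pderiv j (pderiv i p)) (pderiv i (pderiv j p))
        ≤ (2 * t)⁻¹ * m * v := by
      have he : ∀ i j : Fin d, ip d t (pderiv j (pderiv i p)) (pderiv i (pderiv j p))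
          = ip d t (pderiv j (pderiv i p)) (pderiv j (pderiv i p)) := by
        intro i j
        rw [pderiv_pderiv_comm i j]
      calc ∑ i, ∑ j, ip d t (pderiv j (pderiv i p)) (pderiv i (pderiv j p))
          = ∑ i, ∑ j, ip d t (pderiv j (pderiv i p)) (pderiv j (pderiv i p)) := by
            exact Finset.sum_congr rfl fun i _ => Finset.sum_congr rfl fun j _ => he i j
        _ ≤ ∑ i : Fin d, (2 * t)⁻¹ * m * ip d t (pderiv i p) (pderiv i p) := by
            refine Finset.sum_le_sum fun i _ => ?_
            exact IH (pderiv i p) (totalDegree_pderiv_le i p hp)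
        _ = (2 * t)⁻¹ * m * v := by rw [hv, Finset.mul_sum]
    have hSS : ip d t S S ≤ (2 * t)⁻¹ * (m + 1) * v := by
      rw [h2]; push_cast; nlinarith [h3]
    have hCS := ip_CS ht S p
    rw [h1] at hCS
    have hpp : 0 ≤ ip d t p p := ip_nonneg ht p
    have hSSnn : 0 ≤ ip d t S S := ip_nonneg ht S
    have hv2 : v * v ≤ ((2 * t)⁻¹ * (m + 1) * ip d t p p) * v := by
      nlinarith [hCS, hSS, hpp, hvnn]
    rcases hvnn.eq_or_lt.imp Eq.symm id with h0 | hposv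
    · rw [h0]
      exact mul_nonneg (by positivity) hpp
    · have hfin := (mul_le_mul_iff_left₀ hposv).1 hv2
      push_cast
      linarith [hfin]

/-! ### Derivatives -/

lemma hasFDerivAt_eval (q : MvPolynomial (Fin d) ℝ) (x : Fin d → ℝ) :
    HasFDerivAt (fun z : Fin d → ℝ => eval z q)
      (∑ j, eval x (pderiv j q) • (ContinuousLinearMap.proj j : (Fin d → ℝ) →L[ℝ] ℝ)) x := by
  induction q using MvPolynomial.induction_on with
  | C a =>
    have hfun : (fun z : Fin d → ℝ => eval z (C a : MvPolynomial (Fin d) ℝ)) = fun _ => a :=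
      funext fun z => eval_C _
    rw [hfun]
    simpa [pderiv_C] using hasFDerivAt_const a x
  | add p q hp hq =>
    have hfun : (fun z : Fin d → ℝ => eval z (p + q)) = fun z => eval z p + eval z q :=
      funext fun z => by rw [map_add]
    rw [hfun]
    have h := hp.add hq
    refine h.congr_fderiv ?_
    symm
    rw [← Finset.sum_add_distrib]
    exact Finset.sum_congr rfl fun j _ => by rw [map_add, map_add, add_smul]
  | mul_X p i hp =>
    have hproj : HasFDerivAt (fun z : Fin d → ℝ => z i)
        (ContinuousLinearMap.proj i : (Fin d → ℝ) →L[ℝ] ℝ) x := by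
      have hco : (fun z : Fin d → ℝ => z i)
          = ⇑(ContinuousLinearMap.proj (R := ℝ) (φ := fun _ : Fin d => ℝ) i) :=
        funext fun z => rfl
      rw [hco]
      exact ContinuousLinearMap.hasFDerivAt _
    have hfun : (fun z : Fin d → ℝ => eval z (p * X i)) = fun z => eval z p * z i :=
      funext fun z => by rw [map_mul, eval_X]
    rw [hfun]
    have h := hp.mul hproj
    refine h.congr_fderiv ?_
    symm
    refine ContinuousLinearMap.ext fun v => ?_
    simp only [ContinuousLinearMap.sum_apply, ContinuousLinearMap.smul_apply,
      ContinuousLinearMap.proj_apply, ContinuousLinearMap.add_apply, smul_eq_mul]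
    have hterm : ∀ j : Fin d, eval x (pderiv j (p * X i)) * v j
        = eval x (pderiv j p) * x i * v j
          + (if i = j then eval x p * v j else 0) := by
      intro j
      rw [pderiv_mul]
      rcases eq_or_ne i j with rfl | hij
      · rw [pderiv_X_self, if_pos rfl]
        simp only [map_add, map_mul, eval_X, map_one, mul_one, add_mul]
      · rw [pderiv_X_of_ne hij, if_neg hij]
        simp only [map_add, map_mul, eval_X, mul_zero, map_zero, add_zero, add_mul]
    rw [Finset.sum_congr rfl fun j _ => hterm j, Finset.sum_add_distrib,
      Finset.sum_ite_eq Finset.univ i (fun j => eval x p * v j)]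
    have hcomm : ∑ j, eval x (pderiv j p) * x i * v j
        = ∑ j, x i * (eval x (pderiv j p) * v j) :=
      Finset.sum_congr rfl fun j _ => by ring
    rw [if_pos (Finset.mem_univ i), hcomm, ← Finset.mul_sum]
    ring

lemma hasFDerivAt_heatK {t : ℝ} (ht : 0 < t) (x : Fin d → ℝ) :
    HasFDerivAt (heatK d t)
      (∑ j, (-(2 * t)⁻¹ * x j * heatK d t x)
        • (ContinuousLinearMap.proj j : (Fin d → ℝ) →L[ℝ] ℝ)) x := by
  have hproj : ∀ j : Fin d, HasFDerivAt (fun z : Fin d → ℝ => z j)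
      (ContinuousLinearMap.proj j : (Fin d → ℝ) →L[ℝ] ℝ) x := by
    intro j
    have hco : (fun z : Fin d → ℝ => z j)
        = ⇑(ContinuousLinearMap.proj (R := ℝ) (φ := fun _ : Fin d => ℝ) j) :=
      funext fun z => rfl
    rw [hco]
    exact ContinuousLinearMap.hasFDerivAt _
  have hsq : ∀ j : Fin d, HasFDerivAt (fun z : Fin d → ℝ => z j ^ 2)
      ((2 * x j) • (ContinuousLinearMap.proj j : (Fin d → ℝ) →L[ℝ] ℝ)) x := by
    intro j
    have h := (hproj j).mul (hproj j)
    have hfun : (fun z : Fin d → ℝ => z j ^ 2) = fun z => z j * z j :=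
      funext fun z => pow_two (z j)
    rw [hfun, two_mul, add_smul]
    exact h
  have hsum : HasFDerivAt (fun z : Fin d → ℝ => ∑ j, z j ^ 2)
      (∑ j, (2 * x j) • (ContinuousLinearMap.proj j : (Fin d → ℝ) →L[ℝ] ℝ)) x :=
    HasFDerivAt.fun_sum fun j _ => hsq j
  have hinner : HasFDerivAt (fun z : Fin d → ℝ => -(∑ j, z j ^ 2) / (4 * t))
      ((-(4*t)⁻¹) • ∑ j, (2 * x j)
        • (ContinuousLinearMap.proj j : (Fin d → ℝ) →L[ℝ] ℝ)) x := by
    have hfun : (fun z : Fin d → ℝ => -(∑ j, z j ^ 2) / (4 * t))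
        = fun z => (-(4*t)⁻¹) * ∑ j, z j ^ 2 := funext fun z => by ring
    rw [hfun]
    exact hsum.const_mul _
  have hexp := hinner.exp
  have hfin := hexp.const_mul ((4 * Real.pi * t) ^ (-(d:ℝ)/2))
  have hfun2 : heatK d t = fun z : Fin d → ℝ =>
      (4 * Real.pi * t) ^ (-(d:ℝ)/2) * Real.exp (-(∑ j, z j ^ 2) / (4 * t)) := rfl
  rw [hfun2]
  refine hfin.congr_fderiv ?_
  symm
  refine ContinuousLinearMap.ext fun v => ?_
  simp only [ContinuousLinearMap.sum_apply, ContinuousLinearMap.smul_apply,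
    ContinuousLinearMap.proj_apply, smul_eq_mul, Finset.mul_sum]
  refine Finset.sum_congr rfl fun j _ => ?_
  have htne : t ≠ 0 := ne_of_gt ht
  field_simp
  ring

lemma pder_shift {t : ℝ} (ht : 0 < t) (q : MvPolynomial (Fin d) ℝ) (y : Fin d → ℝ)
    (i : Fin d) (x : Fin d → ℝ) :
    pder i (fun z : Fin d → ℝ => eval (z - y) q * heatK d t (z - y)) x
      = -(eval (x - y) (crea d t i q)) * heatK d t (x - y) := by
  have hF := (hasFDerivAt_eval q (x - y)).mul (hasFDerivAt_heatK ht (x - y))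
  have htr : HasFDerivAt (fun z : Fin d → ℝ => z - y)
      (ContinuousLinearMap.id ℝ (Fin d → ℝ)) x := (hasFDerivAt_id x).sub_const y
  have hc := hF.comp x htr
  have hc' : HasFDerivAt (fun z : Fin d → ℝ => eval (z - y) q * heatK d t (z - y))
      ((((eval (x - y) q) • (∑ j, (-(2 * t)⁻¹ * (x - y) j * heatK d t (x - y))
          • (ContinuousLinearMap.proj j : (Fin d → ℝ) →L[ℝ] ℝ))
        + (heatK d t (x - y)) • (∑ j, eval (x - y) (pderiv j q)
          • (ContinuousLinearMap.proj j : (Fin d → ℝ) →L[ℝ] ℝ)))).comp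
        (ContinuousLinearMap.id ℝ (Fin d → ℝ))) x := hc
  rw [pder, hc'.fderiv]
  have hsum_single : ∀ a : Fin d → ℝ, (∑ j, a j * ((Pi.single i 1 : Fin d → ℝ) j)) = a i := by
    intro a
    have h1 : ∀ j : Fin d, a j * ((Pi.single i 1 : Fin d → ℝ) j) = if j = i then a j else 0 := by
      intro j
      rcases eq_or_ne j i with rfl | hji
      · rw [if_pos rfl, Pi.single_eq_same, mul_one]
      · rw [if_neg hji, Pi.single_eq_of_ne hji, mul_zero]
    rw [Finset.sum_congr rfl fun j _ => h1 j, Finset.sum_ite_eq' Finset.univ i a,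
      if_pos (Finset.mem_univ i)]
  simp only [ContinuousLinearMap.coe_comp', Function.comp_apply, ContinuousLinearMap.coe_id',
    id_eq, ContinuousLinearMap.add_apply, ContinuousLinearMap.smul_apply,
    ContinuousLinearMap.sum_apply, ContinuousLinearMap.proj_apply, smul_eq_mul]
  rw [hsum_single (fun j => -(2 * t)⁻¹ * (x - y) j * heatK d t (x - y)),
    hsum_single (fun j => eval (x - y) (pderiv j q))]
  rw [crea]
  simp only [map_sub, map_mul, eval_C, eval_X]
  ring

end WGE

/-- For every polynomial `p` of degree at most `m`,
`∫ |∇(pΓ)|²/Γ ≤ (2(m+d)/t) ∫ p² Γ` where `Γ = Γ(t, ·-y)`. -/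
theorem weighted_gradient_estimate (d m : ℕ) (hd : 1 ≤ d) (t : ℝ) (ht : 0 < t)
    (y : Fin d → ℝ) (p : MvPolynomial (Fin d) ℝ) (hp : p.totalDegree ≤ m) :
    ∫ x : Fin d → ℝ,
        (∑ i, (pder i (fun z => MvPolynomial.eval z p * heatK d t (z - y)) x) ^ 2) /
          heatK d t (x - y) ≤
      2 * ((m : ℝ) + d) / t * ∫ x : Fin d → ℝ,
        (MvPolynomial.eval x p) ^ 2 * heatK d t (x - y) := by
  classical
  have heval0 : ∀ (P : MvPolynomial (Fin d) ℝ) (w : Fin d → ℝ),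
      eval w (MvPolynomial.aeval (fun i => (X i : MvPolynomial (Fin d) ℝ) + C (y i)) P)
        = eval (w + y) P := by
    intro P
    induction P using MvPolynomial.induction_on with
    | C a => intro w; rw [MvPolynomial.aeval_C, MvPolynomial.algebraMap_eq, eval_C, eval_C]
    | add p q hp' hq' => intro w; rw [map_add, map_add, map_add, hp' w, hq' w]
    | mul_X p i hp' =>
      intro w
      rw [map_mul, map_mul, map_mul, hp' w, MvPolynomial.aeval_X, map_add, eval_X, eval_C,
        eval_X, Pi.add_apply]
  set q0 : MvPolynomial (Fin d) ℝ :=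
    MvPolynomial.aeval (fun i => (X i : MvPolynomial (Fin d) ℝ) + C (y i)) p with hq0
  have heval : ∀ w : Fin d → ℝ, eval w q0 = eval (w + y) p := fun w => heval0 p w
  have hdeg : q0.totalDegree ≤ m := le_trans (WGE.deg_aeval_le y p) hp
  have hKpos : ∀ w : Fin d → ℝ, 0 < heatK d t w := fun w => WGE.heatK_pos ht w
  have hgfun : (fun z : Fin d → ℝ => eval z p * heatK d t (z - y))
      = fun z => eval (z - y) q0 * heatK d t (z - y) := by
    funext z
    rw [heval, sub_add_cancel]
  have hsq : ∀ r : MvPolynomial (Fin d) ℝ,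
      (fun w : Fin d → ℝ => (eval w r) ^ 2 * heatK d t w)
        = fun w => eval w (r * r) * heatK d t w :=
    fun r => funext fun w => by rw [map_mul, pow_two]
  have hLpt : ∀ x : Fin d → ℝ,
      (∑ i, (pder i (fun z => eval z p * heatK d t (z - y)) x) ^ 2) / heatK d t (x - y)
        = (fun w : Fin d → ℝ =>
            ∑ i, (eval w (WGE.crea d t i q0)) ^ 2 * heatK d t w) (x - y) := by
    intro x
    have hpd : ∀ i : Fin d, pder i (fun z => eval z p * heatK d t (z - y)) x
        = -(eval (x - y) (WGE.crea d t i q0)) * heatK d t (x - y) := by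
      intro i
      rw [hgfun]
      exact WGE.pder_shift ht q0 y i x
    rw [Finset.sum_congr rfl fun i _ => by rw [hpd i]]
    have hsum : ∑ i, (-(eval (x - y) (WGE.crea d t i q0)) * heatK d t (x - y)) ^ 2
        = (∑ i, (eval (x - y) (WGE.crea d t i q0)) ^ 2) * heatK d t (x - y) ^ 2 := by
      rw [Finset.sum_mul]
      exact Finset.sum_congr rfl fun i _ => by ring
    rw [hsum]
    have hne := (hKpos (x - y)).ne'
    rw [pow_two, mul_div_assoc, mul_div_cancel_right₀ _ hne]
    exact Finset.sum_mul _ _ _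
  have hLeq : (∫ x : Fin d → ℝ,
      (∑ i, (pder i (fun z => eval z p * heatK d t (z - y)) x) ^ 2) / heatK d t (x - y))
      = ∑ i, WGE.ip d t (WGE.crea d t i q0) (WGE.crea d t i q0) := by
    rw [show (fun x : Fin d → ℝ =>
        (∑ i, (pder i (fun z => eval z p * heatK d t (z - y)) x) ^ 2) / heatK d t (x - y))
        = fun x => (fun w : Fin d → ℝ =>
            ∑ i, (eval w (WGE.crea d t i q0)) ^ 2 * heatK d t w) (x - y)
      from funext hLpt]
    rw [MeasureTheory.integral_sub_right_eq_self
      (fun w : Fin d → ℝ => ∑ i, (eval w (WGE.crea d t i q0)) ^ 2 * heatK d t w) y]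
    rw [integral_finset_sum Finset.univ (fun i _ => by
      rw [hsq (WGE.crea d t i q0)]
      exact WGE.integrable_poly ht _)]
    exact Finset.sum_congr rfl fun i _ => by rw [hsq (WGE.crea d t i q0)]; rfl
  have hR : (∫ x : Fin d → ℝ, (eval x p) ^ 2 * heatK d t (x - y))
      = WGE.ip d t q0 q0 := by
    have h1 : (fun x : Fin d → ℝ => (eval x p) ^ 2 * heatK d t (x - y))
        = fun x => (fun w : Fin d → ℝ => eval w (q0 * q0) * heatK d t w) (x - y) := by
      funext x
      rw [show (fun w : Fin d → ℝ => eval w (q0 * q0) * heatK d t w) (x - y)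
          = eval (x - y) (q0 * q0) * heatK d t (x - y) from rfl,
        map_mul, heval, sub_add_cancel, pow_two]
    rw [h1, MeasureTheory.integral_sub_right_eq_self
      (fun w : Fin d → ℝ => eval w (q0 * q0) * heatK d t w) y]
    rfl
  rw [hLeq, hR]
  have hpp := WGE.ip_nonneg ht q0
  have hone : ∀ i : Fin d, WGE.ip d t (WGE.crea d t i q0) (WGE.crea d t i q0)
      = WGE.ip d t (pderiv i q0) (pderiv i q0) + (2*t)⁻¹ * WGE.ip d t q0 q0 := by
    intro i
    have h := WGE.ip_crea_crea ht i i q0 q0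
    rw [if_pos rfl] at h
    exact h
  have hgb := WGE.grad_bound ht m q0 hdeg
  have hbound : ∑ i, WGE.ip d t (WGE.crea d t i q0) (WGE.crea d t i q0)
      ≤ (2*t)⁻¹ * ((m:ℝ) + d) * WGE.ip d t q0 q0 := by
    rw [Finset.sum_congr rfl fun i _ => hone i, Finset.sum_add_distrib, Finset.sum_const,
      Finset.card_univ, Fintype.card_fin, nsmul_eq_mul]
    nlinarith [hgb, hpp]
  refine le_trans hbound ?_
  have hcoef : (2*t)⁻¹ * ((m:ℝ) + d) ≤ 2 * ((m:ℝ) + d) / t := by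
    rw [div_eq_mul_inv, mul_inv]
    have h1 : (0:ℝ) ≤ (m:ℝ) + d := by positivity
    have h2 : (0:ℝ) < t⁻¹ := by positivity
    nlinarith [h1, h2]
  exact mul_le_mul_of_nonneg_right hcoef hpp
end

section
/- There exists C(d) < ∞ such that for every m ∈ ℕ, every polynomial p of degree at most m on ℝ^d, every t > 0 and y ∈ ℝ^d: ∫_{ℝ^d} |∇p|² Γ(t, x−y) dx ≤ (Cm/t) ∫_{ℝ^d} p² Γ(t, x−y) dx. -/
open MeasureTheory MvPolynomial

/-!
Write `Γ(t, x - y)` as a constant times `w(x) = exp (-b |x - y|²)` with `b = 1/(4t)`, and let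
`⟨P, Q⟩ = ∫ P Q w`. Since `∂ᵢ w = -2b (xᵢ - yᵢ) w`, integration by parts shows that the adjoint of
`∂ᵢ` for this pairing is `∂ᵢ* = κ (xᵢ - yᵢ) - ∂ᵢ` with `κ = 2b`. For `q = ∂ᵢ f` this gives
`⟨q, q⟩ = ⟨f, ∂ᵢ* q⟩` and, because `∂ᵢ (xᵢ - yᵢ) = 1`, `⟨∂ᵢ* q, ∂ᵢ* q⟩ = κ ⟨q, q⟩ + ⟨∂ᵢ q, ∂ᵢ q⟩`.
Cauchy–Schwarz and induction on the degree then give `⟨∂ᵢ f, ∂ᵢ f⟩ ≤ κ m ⟨f, f⟩`, and summing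
over the `d` coordinates gives the theorem with `C = d / 2`. The induction uses nothing but
positivity of the pairing, the Leibniz rule and the integration-by-parts identity.
-/

namespace LinearMap

variable {R : Type*} [CommRing R] [Algebra ℝ R] (L : R →ₗ[ℝ] ℝ)

theorem sq_map_mul_le (hL : ∀ P, 0 ≤ L (P ^ 2)) (P Q : R) :
    L (P * Q) ^ 2 ≤ L (P ^ 2) * L (Q ^ 2) := by
  have hquad : ∀ r : ℝ, 0 ≤ L (P ^ 2) * (r * r) + (-2 * L (P * Q)) * r + L (Q ^ 2) := by
    intro r
    have h : (algebraMap ℝ R r * P - Q) ^ 2 =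
        algebraMap ℝ R (r * r) * P ^ 2 - algebraMap ℝ R (2 * r) * (P * Q) + Q ^ 2 := by
      simp only [map_mul, map_ofNat]; ring
    have := hL (algebraMap ℝ R r * P - Q)
    simp only [h, map_add, map_sub, L.map_algebraMap_mul, Algebra.algebraMap_self_apply] at this
    linarith
  have := discrim_le_zero hquad
  rw [discrim] at this
  nlinarith

theorem map_derivation_sq_le (hL : ∀ P, 0 ≤ L (P ^ 2))
    (D : Derivation ℝ R R) {a : R} (ha : D a = 1) {κ : ℝ} (hκ : 0 ≤ κ)
    (hibp : ∀ P, L (D P) = κ * L (a * P)) (m : ℕ) {f : R} (hf : (⇑D)^[m + 1] f = 0) :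
    L (D f ^ 2) ≤ κ * m * L (f ^ 2) := by
  induction m generalizing f with
  | zero =>
    rw [Function.iterate_one] at hf
    simp [hf]
  | succ m ih =>
    set q := D f
    set q' := D q
    have hq' : L (q' ^ 2) ≤ κ * m * L (q ^ 2) :=
      ih (by rwa [Function.iterate_succ_apply] at hf)
    -- `κ a - D` is the adjoint of `D` for the pairing `L (P * Q)`.
    set G := algebraMap ℝ R κ * (a * q) - q'
    have hfG : L (q ^ 2) = L (f * G) := by
      have h : f * G = algebraMap ℝ R κ * (a * (f * q)) - (D (f * q) - q ^ 2) := by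
        rw [Derivation.leibniz, smul_eq_mul, smul_eq_mul]; ring
      simp only [h, map_sub, L.map_algebraMap_mul, Algebra.algebraMap_self_apply, hibp]; ring
    have hG : L (G ^ 2) = κ * L (q ^ 2) + L (q' ^ 2) := by
      have h : G ^ 2 = algebraMap ℝ R κ * (algebraMap ℝ R κ * (a * (a * q ^ 2)) - D (a * q ^ 2))
          + algebraMap ℝ R κ * q ^ 2 + q' ^ 2 := by
        rw [Derivation.leibniz, Derivation.leibniz_pow, ha]
        simp only [smul_eq_mul, nsmul_eq_mul]; ring
      simp only [h, map_add, map_sub, L.map_algebraMap_mul, Algebra.algebraMap_self_apply, hibp]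
      ring
    have hcs := L.sq_map_mul_le hL f G
    rw [← hfG, hG] at hcs
    have hq_nonneg : 0 ≤ L (q ^ 2) := hL q
    have hf_nonneg : 0 ≤ L (f ^ 2) := hL f
    rcases hq_nonneg.eq_or_lt with h0 | hpos
    · rw [← h0]; positivity
    · have hsq : L (q ^ 2) * L (q ^ 2) ≤ κ * (m + 1) * L (f ^ 2) * L (q ^ 2) := by nlinarith
      push_cast
      exact le_of_mul_le_mul_right hsq hpos

end LinearMap

namespace MvPolynomial

variable {R σ : Type*} [CommSemiring R]

theorem totalDegree_pderiv_le (i : σ) (p : MvPolynomial σ R) :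
    (pderiv i p).totalDegree ≤ p.totalDegree - 1 := by
  refine Finset.sup_le fun s hs => ?_
  have hs' : s + Finsupp.single i 1 ∈ p.support := by
    rw [mem_support_iff, coeff_pderiv] at hs
    exact mem_support_iff.mpr (left_ne_zero_of_mul hs)
  have := le_totalDegree hs'
  rw [Finsupp.sum_add_index' (fun _ => rfl) (fun _ _ _ => rfl),
    Finsupp.sum_single_index rfl] at this
  omega

theorem pderiv_iterate_eq_zero (i : σ) {m : ℕ} {p : MvPolynomial σ R} (hp : p.totalDegree ≤ m) :
    (⇑(pderiv i))^[m + 1] p = 0 := by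
  induction m generalizing p with
  | zero =>
    rw [Nat.le_zero, totalDegree_eq_zero_iff_eq_C] at hp
    rw [Function.iterate_one, hp, pderiv_C]
  | succ m ih =>
    rw [Function.iterate_succ_apply]
    exact ih ((totalDegree_pderiv_le i p).trans (by omega))

theorem hasLineDerivAt_eval [DecidableEq σ] (P : MvPolynomial σ ℝ) (x : σ → ℝ) (i : σ) :
    HasLineDerivAt ℝ (fun x => eval x P) (eval x (pderiv i P)) x (Pi.single i 1) := by
  unfold HasLineDerivAt
  induction P using MvPolynomial.induction_on with
  | C a => simpa using hasDerivAt_const (0 : ℝ) a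
  | add p q hp hq => simpa using hp.fun_add hq
  | mul_X p j hp =>
    have hX := ((hasDerivAt_id (0 : ℝ)).mul_const ((Pi.single i 1 : σ → ℝ) j)).const_add (x j)
    simp only [map_mul, eval_X, Pi.add_apply, Pi.smul_apply, smul_eq_mul]
    refine (hp.fun_mul hX).congr_deriv ?_
    simp only [pderiv_mul, pderiv_X, Pi.single_apply, eq_comm]
    split_ifs <;> simp

end MvPolynomial

section Gaussian

open Real

variable {ι : Type*} [Fintype ι] {b : ℝ}

theorem integrable_pow_mul_exp_neg_mul_sub_sq (hb : 0 < b) (k : ℕ) (c : ℝ) :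
    Integrable fun x : ℝ => x ^ k * exp (-(b * (x - c) ^ 2)) := by
  have hcentered (j : ℕ) : Integrable fun u : ℝ => u ^ j * exp (-(b * u ^ 2)) := by
    simpa [rpow_natCast, neg_mul] using
      integrable_rpow_mul_exp_neg_mul_sq hb (s := j) (by linarith [j.cast_nonneg (α := ℝ)])
  have hshift : Integrable fun u : ℝ => (u + c) ^ k * exp (-(b * u ^ 2)) := by
    simp_rw [add_pow, Finset.sum_mul]
    refine integrable_finsetSum _ fun j _ => ?_
    simpa [mul_comm, mul_assoc, mul_left_comm] using
      (hcentered j).const_mul (c ^ (k - j) * (k.choose j))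
  simpa using hshift.comp_sub_right c

noncomputable def gaussianWeight (b : ℝ) (y x : ι → ℝ) : ℝ :=
  exp (-(b * ∑ j, (x j - y j) ^ 2))

theorem gaussianWeight_pos (b : ℝ) (y x : ι → ℝ) : 0 < gaussianWeight b y x := exp_pos _

theorem gaussianWeight_eq_prod (b : ℝ) (y x : ι → ℝ) :
    gaussianWeight b y x = ∏ j, exp (-(b * (x j - y j) ^ 2)) := by
  rw [gaussianWeight, ← exp_sum, Finset.mul_sum, ← Finset.sum_neg_distrib]

theorem integrable_eval_mul_gaussianWeight (hb : 0 < b) (y : ι → ℝ) (P : MvPolynomial ι ℝ) :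
    Integrable fun x => eval x P * gaussianWeight b y x := by
  simp_rw [gaussianWeight_eq_prod, eval_eq', Finset.sum_mul, mul_assoc, ← Finset.prod_mul_distrib]
  exact integrable_finsetSum _ fun s _ => (Integrable.fintype_prod
    fun j => integrable_pow_mul_exp_neg_mul_sub_sq hb (s j) (y j)).const_mul _

theorem hasLineDerivAt_gaussianWeight [DecidableEq ι] (b : ℝ) (y x : ι → ℝ) (i : ι) :
    HasLineDerivAt ℝ (gaussianWeight b y) (-(2 * b) * (x i - y i) * gaussianWeight b y x) x
      (Pi.single i 1) := by
  have hQ := hasLineDerivAt_eval (∑ j, (X j - C (y j)) ^ 2) x i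
  unfold HasLineDerivAt at *
  simp only [map_sum, map_pow, map_sub, eval_X, eval_C] at hQ
  simp only [gaussianWeight]
  refine (((hQ.const_mul b).fun_neg).exp).congr_deriv ?_
  simp [Pi.single_apply, apply_ite (eval x), Finset.sum_ite_eq']
  ring

theorem integral_eval_pderiv_mul_gaussianWeight [DecidableEq ι] (hb : 0 < b) (y : ι → ℝ) (i : ι)
    (P : MvPolynomial ι ℝ) :
    ∫ x, eval x (pderiv i P) * gaussianWeight b y x =
      2 * b * ∫ x, eval x ((X i - C (y i)) * P) * gaussianWeight b y x := by
  have hweight (x : ι → ℝ) : eval x P * (-(2 * b) * (x i - y i) * gaussianWeight b y x) =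
      -(2 * b) * (eval x ((X i - C (y i)) * P) * gaussianWeight b y x) := by
    simp only [map_mul, map_sub, eval_X, eval_C]; ring
  have h := integral_bilinear_hasLineDerivAt_right_eq_neg_left_of_integrable
    (B := ContinuousLinearMap.mul ℝ ℝ) (μ := volume)
    (integrable_eval_mul_gaussianWeight hb y (pderiv i P))
    (by simpa only [ContinuousLinearMap.mul_apply', hweight] using
      (integrable_eval_mul_gaussianWeight hb y ((X i - C (y i)) * P)).const_mul (-(2 * b)))
    (integrable_eval_mul_gaussianWeight hb y P)
    (fun x _ => hasLineDerivAt_eval P x i)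
    (fun x _ => hasLineDerivAt_gaussianWeight b y x i)
  simp only [ContinuousLinearMap.mul_apply', hweight, integral_const_mul] at h
  linarith

noncomputable def gaussianMoment (hb : 0 < b) (y : ι → ℝ) : MvPolynomial ι ℝ →ₗ[ℝ] ℝ where
  toFun P := ∫ x, eval x P * gaussianWeight b y x
  map_add' P Q := by
    simp only [map_add, add_mul]
    exact integral_add (integrable_eval_mul_gaussianWeight hb y P)
      (integrable_eval_mul_gaussianWeight hb y Q)
  map_smul' c P := by
    simp only [smul_eval, mul_assoc, integral_const_mul]
    rfl

theorem gaussianMoment_apply (hb : 0 < b) (y : ι → ℝ) (P : MvPolynomial ι ℝ) :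
    gaussianMoment hb y P = ∫ x, eval x P * gaussianWeight b y x := rfl

theorem gaussianMoment_sq_nonneg (hb : 0 < b) (y : ι → ℝ) (P : MvPolynomial ι ℝ) :
    0 ≤ gaussianMoment hb y (P ^ 2) :=
  integral_nonneg fun x => by
    rw [map_pow]; exact mul_nonneg (sq_nonneg _) (gaussianWeight_pos b y x).le

theorem gaussianMoment_pderiv_sq_le [DecidableEq ι] (hb : 0 < b) (y : ι → ℝ) (i : ι) {m : ℕ}
    {p : MvPolynomial ι ℝ} (hp : p.totalDegree ≤ m) :
    gaussianMoment hb y (pderiv i p ^ 2) ≤ 2 * b * m * gaussianMoment hb y (p ^ 2) :=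
  (gaussianMoment hb y).map_derivation_sq_le (gaussianMoment_sq_nonneg hb y) (pderiv i)
    (a := X i - C (y i)) (by simp) (by positivity) (integral_eval_pderiv_mul_gaussianWeight hb y i)
    m (pderiv_iterate_eq_zero i hp)

theorem integral_sum_sq_pderiv_mul_gaussianWeight_le [DecidableEq ι] (hb : 0 < b) (y : ι → ℝ)
    {m : ℕ} {p : MvPolynomial ι ℝ} (hp : p.totalDegree ≤ m) :
    ∫ x, (∑ i, eval x (pderiv i p) ^ 2) * gaussianWeight b y x ≤
      Fintype.card ι * (2 * b * m) * ∫ x, eval x p ^ 2 * gaussianWeight b y x := by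
  have hmoment (P : MvPolynomial ι ℝ) :
      ∫ x, eval x P ^ 2 * gaussianWeight b y x = gaussianMoment hb y (P ^ 2) := by
    simp [gaussianMoment_apply]
  calc ∫ x, (∑ i, eval x (pderiv i p) ^ 2) * gaussianWeight b y x
      = ∑ i, gaussianMoment hb y (pderiv i p ^ 2) := by
        simp_rw [Finset.sum_mul, ← hmoment]
        refine integral_finsetSum _ fun i _ => ?_
        exact (integrable_eval_mul_gaussianWeight hb y (pderiv i p ^ 2)).congr
          (.of_forall fun x => by simp)
    _ ≤ ∑ _i : ι, 2 * b * m * gaussianMoment hb y (p ^ 2) :=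
        Finset.sum_le_sum fun i _ => gaussianMoment_pderiv_sq_le hb y i hp
    _ = Fintype.card ι * (2 * b * m) * ∫ x, eval x p ^ 2 * gaussianWeight b y x := by
        rw [Finset.sum_const, Finset.card_univ, nsmul_eq_mul, hmoment]; ring

end Gaussian

theorem heatK_sub_eq (d : ℕ) (t : ℝ) (y x : Fin d → ℝ) :
    heatK d t (x - y) = (4 * Real.pi * t) ^ (-(d : ℝ) / 2) * gaussianWeight (4 * t)⁻¹ y x := by
  rw [heatK, gaussianWeight]
  simp only [Pi.sub_apply]
  ring_nf

/-- Markov-brothers-type inequality in Gaussian weighted L²: there exists `C(d) < ∞` such that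
for every `m`, every polynomial `p` of degree at most `m`, every `t > 0`, `y ∈ ℝ^d`,
`∫ |∇p|² Γ(t,·-y) ≤ (Cm/t) ∫ p² Γ(t,·-y)`. -/
theorem gradient_gaussian_markov (d : ℕ) (hd : 1 ≤ d) :
    ∃ C : ℝ, 0 < C ∧
      ∀ (m : ℕ) (p : MvPolynomial (Fin d) ℝ), p.totalDegree ≤ m →
        ∀ (t : ℝ), 0 < t → ∀ y : Fin d → ℝ,
          ∫ x : Fin d → ℝ,
              (∑ i, (MvPolynomial.eval x (MvPolynomial.pderiv i p)) ^ 2) * heatK d t (x - y) ≤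
            C * m / t * ∫ x : Fin d → ℝ, (MvPolynomial.eval x p) ^ 2 * heatK d t (x - y) := by
  refine ⟨d / 2, div_pos (Nat.cast_pos.mpr hd) two_pos, fun m p hp t ht y => ?_⟩
  have hb : 0 < (4 * t)⁻¹ := by positivity
  have hmarkov := integral_sum_sq_pderiv_mul_gaussianWeight_le hb y hp
  rw [Fintype.card_fin] at hmarkov
  simp_rw [heatK_sub_eq, mul_left_comm _ ((4 * Real.pi * t) ^ (-(d : ℝ) / 2)), integral_const_mul]
  calc _ ≤ (4 * Real.pi * t) ^ (-(d : ℝ) / 2) * (d * (2 * (4 * t)⁻¹ * m) *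
          ∫ x, eval x p ^ 2 * gaussianWeight (4 * t)⁻¹ y x) := by gcongr
    _ = _ := by field_simp; ring
end

section
/- For every n ∈ ℕ and every R > 0, ∫_R^∞ t^{2n} e^{−t²} dt ≤ (2^n n! / R) e^{−R²/2}. -/
open MeasureTheory Filter

lemma gauss_tail_aux (R : ℝ) (hR : 0 < R) :
    ∫ t in Set.Ioi R, t * Real.exp (-t ^ 2 / 2) = Real.exp (-R ^ 2 / 2) := by
  have hderiv : ∀ x ∈ Set.Ici R,
      HasDerivAt (fun x : ℝ => -Real.exp (-x ^ 2 / 2)) (x * Real.exp (-x ^ 2 / 2)) x := by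
    intro x _
    have h1 : HasDerivAt (fun x : ℝ => -x ^ 2 / 2) (-x) x := by
      have := ((hasDerivAt_pow 2 x).neg).div_const 2
      refine this.congr_deriv ?_
      ring
    have h2 := (h1.exp).neg
    refine h2.congr_deriv ?_
    ring
  have htend : Filter.Tendsto (fun x : ℝ => -Real.exp (-x ^ 2 / 2)) Filter.atTop (nhds 0) := by
    rw [show (0 : ℝ) = -0 by ring]
    apply Filter.Tendsto.neg
    apply Real.tendsto_exp_atBot.comp
    have h : Filter.Tendsto (fun x : ℝ => x ^ 2 / 2) Filter.atTop Filter.atTop :=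
      (tendsto_pow_atTop two_ne_zero).atTop_div_const (by norm_num)
    have := Filter.tendsto_neg_atTop_atBot.comp h
    simpa [Function.comp_def, neg_div] using this
  have hint : IntegrableOn (fun x : ℝ => x * Real.exp (-x ^ 2 / 2)) (Set.Ioi R) := by
    have := (integrable_mul_exp_neg_mul_sq (b := (2⁻¹ : ℝ)) (by norm_num)).integrableOn (s := Set.Ioi R)
    apply this.congr_fun ?_ measurableSet_Ioi
    intro x _
    ring_nf
  have := MeasureTheory.integral_Ioi_of_hasDerivAt_of_tendsto' hderiv hint htend
  rw [this]
  ring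

/-- Gaussian moment tail estimate: for every `n ∈ ℕ` and `R > 0`,
`∫_R^∞ t^{2n} e^{-t²} dt ≤ (2ⁿ n! / R) e^{-R²/2}`. -/
theorem gaussian_moment_tail (n : ℕ) (R : ℝ) (hR : 0 < R) :
    ∫ t in Set.Ioi R, t ^ (2 * n) * Real.exp (-t ^ 2) ≤
      2 ^ n * Nat.factorial n / R * Real.exp (-R ^ 2 / 2) := by
  set C : ℝ := 2 ^ n * Nat.factorial n / R with hC
  have hCpos : 0 < C := by
    apply div_pos _ hR
    positivity
  have hpt : ∀ t ∈ Set.Ioi R,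
      t ^ (2 * n) * Real.exp (-t ^ 2) ≤ C * (t * Real.exp (-t ^ 2 / 2)) := by
    intro t ht
    have htR : R < t := ht
    have ht0 : 0 < t := hR.trans htR
    have hkey : (t ^ 2 / 2) ^ n / Nat.factorial n ≤ Real.exp (t ^ 2 / 2) :=
      Real.pow_div_factorial_le_exp (t ^ 2 / 2) (by positivity) n
    have hfac : (0 : ℝ) < Nat.factorial n := by exact_mod_cast Nat.factorial_pos n
    have h1 : t ^ (2 * n) * Real.exp (-t ^ 2 / 2) ≤ 2 ^ n * Nat.factorial n := by
      have h2 : t ^ (2 * n) = 2 ^ n * (t ^ 2 / 2) ^ n := by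
        rw [pow_mul, div_pow]
        field_simp
      rw [h2]
      have h3 : (t ^ 2 / 2) ^ n ≤ Nat.factorial n * Real.exp (t ^ 2 / 2) := by
        rw [div_le_iff₀ hfac] at hkey
        linarith [hkey]
      calc 2 ^ n * (t ^ 2 / 2) ^ n * Real.exp (-t ^ 2 / 2)
          ≤ 2 ^ n * (Nat.factorial n * Real.exp (t ^ 2 / 2)) * Real.exp (-t ^ 2 / 2) := by
            apply mul_le_mul_of_nonneg_right _ (Real.exp_nonneg _)
            exact mul_le_mul_of_nonneg_left h3 (by positivity)
        _ = 2 ^ n * Nat.factorial n * Real.exp (t ^ 2 / 2 + -t ^ 2 / 2) := by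
            rw [Real.exp_add]; ring
        _ = 2 ^ n * Nat.factorial n := by
            rw [show t ^ 2 / 2 + -t ^ 2 / 2 = 0 by ring, Real.exp_zero, mul_one]
    have hsplit : Real.exp (-t ^ 2) = Real.exp (-t ^ 2 / 2) * Real.exp (-t ^ 2 / 2) := by
      rw [← Real.exp_add]; ring_nf
    have htR1 : (1 : ℝ) ≤ t / R := (one_le_div hR).mpr htR.le
    calc t ^ (2 * n) * Real.exp (-t ^ 2)
        = (t ^ (2 * n) * Real.exp (-t ^ 2 / 2)) * Real.exp (-t ^ 2 / 2) := by
          rw [hsplit]; ring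
      _ ≤ (2 ^ n * Nat.factorial n) * Real.exp (-t ^ 2 / 2) :=
          mul_le_mul_of_nonneg_right h1 (Real.exp_nonneg _)
      _ ≤ (2 ^ n * Nat.factorial n) * ((t / R) * Real.exp (-t ^ 2 / 2)) := by
          apply mul_le_mul_of_nonneg_left _ (by positivity)
          nlinarith [Real.exp_pos (-t ^ 2 / 2)]
      _ = C * (t * Real.exp (-t ^ 2 / 2)) := by rw [hC]; ring
  have hRHSint : IntegrableOn (fun t : ℝ => C * (t * Real.exp (-t ^ 2 / 2))) (Set.Ioi R) := by
    have hbase : Integrable (fun x : ℝ => x * Real.exp (-(2⁻¹ : ℝ) * x ^ 2)) :=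
      integrable_mul_exp_neg_mul_sq (by norm_num)
    have := (hbase.const_mul C).integrableOn (s := Set.Ioi R)
    apply this.congr_fun ?_ measurableSet_Ioi
    intro x _
    ring_nf
  have hLHSint : IntegrableOn (fun t : ℝ => t ^ (2 * n) * Real.exp (-t ^ 2)) (Set.Ioi R) := by
    apply Integrable.mono' hRHSint
    · apply Continuous.aestronglyMeasurable
      continuity
    · filter_upwards [ae_restrict_mem measurableSet_Ioi] with t ht
      have ht0 : 0 < t := hR.trans ht
      rw [Real.norm_eq_abs, abs_of_nonneg (by positivity)]
      exact hpt t ht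
  calc ∫ t in Set.Ioi R, t ^ (2 * n) * Real.exp (-t ^ 2)
      ≤ ∫ t in Set.Ioi R, C * (t * Real.exp (-t ^ 2 / 2)) :=
        setIntegral_mono_on hLHSint hRHSint measurableSet_Ioi hpt
    _ = C * ∫ t in Set.Ioi R, t * Real.exp (-t ^ 2 / 2) := by rw [integral_const_mul]
    _ = C * Real.exp (-R ^ 2 / 2) := by rw [gauss_tail_aux R hR]
end

section
/- For all j, k ∈ ℕ with j ≤ k, the j-th derivative of the Newton polynomial N_k at 0 satisfies |N_k^{(j)}(0)| ≤ C(k, j), the binomial coefficient k choose j. -/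
open Polynomial Finset

noncomputable def NP (k : ℕ) : Polynomial ℝ := ∏ i ∈ Finset.range k, (X - C (i:ℝ))

lemma np_coeff_bound (k j : ℕ) :
    |(NP k).coeff j| * (Nat.factorial j : ℝ) ≤ (Nat.factorial k : ℝ) * (Nat.choose k j : ℝ) := by
  induction k generalizing j with
  | zero =>
    simp [NP, Polynomial.coeff_one]
    rcases eq_or_ne j 0 with h | h <;> simp [h]
  | succ k ih =>
    have hrec : NP (k+1) = NP k * X - C (k:ℝ) * NP k := by
      rw [NP, Finset.prod_range_succ, mul_sub, mul_comm]
      ring_nf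
      rw [NP]
      ring
    have hc : (NP (k+1)).coeff j = (NP k * X).coeff j - (k:ℝ) * (NP k).coeff j := by
      rw [hrec]; simp [coeff_sub, coeff_C_mul]
    rcases j with _ | j
    · -- j = 0
      rw [hc]
      simp [coeff_mul_X_zero]
      have h0 : |(NP k).coeff 0| ≤ (Nat.factorial k : ℝ) := by
        have := ih 0; simpa using this
      calc (k:ℝ) * |(NP k).coeff 0|
          = (k:ℝ) * |(NP k).coeff 0| := by
            rfl
        _ ≤ (k:ℝ) * (Nat.factorial k : ℝ) := mul_le_mul_of_nonneg_left h0 (by positivity)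
        _ ≤ (Nat.factorial (k+1) : ℝ) := by
            rw [Nat.factorial_succ]; push_cast
            nlinarith [(Nat.cast_pos (α := ℝ)).mpr (Nat.factorial_pos k)]
    · -- j = j+1
      rw [hc, coeff_mul_X]
      have h1 : |(NP k).coeff j - (k:ℝ) * (NP k).coeff (j+1)| ≤ |(NP k).coeff j| + (k:ℝ) * |(NP k).coeff (j+1)| := by
        refine (abs_sub _ _).trans ?_
        rw [abs_mul, abs_of_nonneg (by positivity : (0:ℝ) ≤ (k:ℝ))]
      have hfac : (Nat.factorial (j+1) : ℝ) = (j+1) * Nat.factorial j := by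
        rw [Nat.factorial_succ]; push_cast; ring
      have ihj := ih j
      have ihj1 := ih (j+1)
      have hch : ((j:ℝ)+1) * (Nat.choose k j : ℝ) + (k:ℝ) * (Nat.choose k (j+1) : ℝ)
          ≤ ((k:ℝ)+1) * (Nat.choose (k+1) (j+1) : ℝ) := by
        have hp : Nat.choose (k+1) (j+1) = Nat.choose k j + Nat.choose k (j+1) := Nat.choose_succ_succ k j
        rcases le_or_gt (j+1) (k+1) with hle | hlt
        · have hj1 : (j:ℝ) + 1 ≤ (k:ℝ) + 1 := by exact_mod_cast hle
          rw [hp]; push_cast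
          nlinarith [Nat.cast_nonneg (α := ℝ) (Nat.choose k j), Nat.cast_nonneg (α := ℝ) (Nat.choose k (j+1))]
        · have h1 : Nat.choose k j = 0 := Nat.choose_eq_zero_of_lt (by omega)
          have h2 : Nat.choose k (j+1) = 0 := Nat.choose_eq_zero_of_lt (by omega)
          simp [h1, h2]
          positivity
      calc |(NP k).coeff j - (k:ℝ) * (NP k).coeff (j+1)| * (Nat.factorial (j+1) : ℝ)
          ≤ (|(NP k).coeff j| + (k:ℝ) * |(NP k).coeff (j+1)|) * (Nat.factorial (j+1) : ℝ) :=
            mul_le_mul_of_nonneg_right h1 (by positivity)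
        _ = ((j:ℝ)+1) * (|(NP k).coeff j| * Nat.factorial j)
            + (k:ℝ) * (|(NP k).coeff (j+1)| * Nat.factorial (j+1)) := by
            rw [hfac]; ring
        _ ≤ ((j:ℝ)+1) * ((Nat.factorial k : ℝ) * Nat.choose k j)
            + (k:ℝ) * ((Nat.factorial k : ℝ) * Nat.choose k (j+1)) := by
            gcongr
        _ ≤ (Nat.factorial (k+1) : ℝ) * (Nat.choose (k+1) (j+1) : ℝ) := by
            rw [Nat.factorial_succ]; push_cast
            nlinarith [hch, (Nat.cast_pos (α := ℝ)).mpr (Nat.factorial_pos k)]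

lemma iteratedDeriv_polyEval (p : Polynomial ℝ) (j : ℕ) :
    iteratedDeriv j (fun x => p.eval x) = fun x => (derivative^[j] p).eval x := by
  induction j with
  | zero => simp
  | succ j ih =>
    rw [iteratedDeriv_succ, ih, Function.iterate_succ_apply']
    funext x
    exact Polynomial.deriv _

/-- The one-variable Newton polynomial `N_k(x) = (1/k!) ∏_{j=0}^{k-1} (x - j)`. -/
noncomputable def newtonPoly (k : ℕ) (x : ℝ) : ℝ :=
  (1 / (Nat.factorial k : ℝ)) * ∏ j ∈ Finset.range k, (x - j)

/-- For `j ≤ k`, the `j`-th derivative of the Newton polynomial `N_k` at `0` satisfies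
`|N_k^{(j)}(0)| ≤ binom(k, j)`. -/
theorem newtonPoly_deriv_bound (j k : ℕ) (hjk : j ≤ k) :
    |iteratedDeriv j (newtonPoly k) 0| ≤ (Nat.choose k j : ℝ) := by
  have hfun : newtonPoly k = fun x => (C (1 / (Nat.factorial k : ℝ)) * NP k).eval x := by
    funext x
    simp [newtonPoly, NP, Polynomial.eval_prod]
  rw [hfun, iteratedDeriv_polyEval]
  rw [Polynomial.iterate_derivative_C_mul]
  simp only [Polynomial.eval_mul, Polynomial.eval_C]
  have heval : (derivative^[j] (NP k)).eval 0 = (Nat.factorial j : ℝ) * (NP k).coeff j := by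
    rw [show ((derivative^[j] (NP k)).eval 0) = (derivative^[j] (NP k)).coeff 0 by
      simp [Polynomial.coeff_zero_eq_eval_zero]]
    rw [Polynomial.coeff_iterate_derivative]
    simp [Nat.descFactorial_self, nsmul_eq_mul]
  rw [heval, abs_mul, abs_mul]
  have hk0 : (0:ℝ) < (Nat.factorial k : ℝ) := by positivity
  rw [abs_of_nonneg (by positivity : (0:ℝ) ≤ 1 / (Nat.factorial k : ℝ)),
      abs_of_nonneg (by positivity : (0:ℝ) ≤ (Nat.factorial j : ℝ))]
  have := np_coeff_bound k j
  rw [one_div, inv_mul_le_iff₀ hk0]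
  nlinarith [this]
end
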